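/- arXiv:1703.02225 — 10 statements merged into one kernel-verified Lean document; each statement's English description precedes it below -/
import Mathlib

section
/- Let B = (b_{ij}) be an n×n integer skew-symmetrizable matrix with adjacency matrix A = ([b_{ij}]_+), and let I ⊆ {1,…,n} be nonempty. If the principal submatrix of A with rows and columns indexed by I has nonzero determinant, then there exists a nonempty subset S ⊆ I such that the full subquiver of Q(B) on S is a (chordless oriented) cycle: S can be enumerated as j_1, …, j_m with m ≥ 3 so that b_{j_s j_{s+1}} > 0 for 1 ≤ s ≤ m−1, b_{j_m j_1} > 0, and b_{j_s j_t} = 0 for every pair s < t that is not cyclically adjacent. -/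
def SkewSymmetrizable {n : ℕ} (B : Matrix (Fin n) (Fin n) ℤ) : Prop :=
  ∃ d : Fin n → ℤ, (∀ i, 0 < d i) ∧ ∀ i j, d i * B i j = - (d j * B j i)

/-!
A nonzero determinant forces every row of the adjacency matrix on `I` to be nonzero, so every
vertex of `I` has an arrow to a vertex of `I`; following such arrows in a finite set closes up into
a closed walk. A shortest closed walk has no chord: a chord `f a → f b` with `b ≠ a + 1` shortcuts
the walk, and a repeated vertex yields such a chord from its predecessor. Skew-symmetrizability
makes the quiver free of loops and 2-cycles, so this shortest cycle has length at least 3, and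
`b_{st} = 0` off the cycle because a nonzero entry is an arrow in one direction or the other.
-/

section ClosedWalk

variable {α : Type*} {r : α → α → Prop}

variable (r) in
def IsClosedWalk {k : ℕ} (f : Fin (k + 1) → α) : Prop :=
  ∀ s, r (f s) (f (s + 1))

variable (r) in
/-- The arrows of the cycle and no chords: `f a → f b` exactly when `b` follows `a` cyclically. -/
def IsInducedCycle {k : ℕ} (f : Fin (k + 1) → α) : Prop :=
  ∀ a b, r (f a) (f b) ↔ b = a + 1

theorem IsInducedCycle.injective {k : ℕ} {f : Fin (k + 1) → α} (hf : IsInducedCycle r f) :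
    Function.Injective f := by
  intro s t hst
  have hprev : r (f (s - 1)) (f t) := hst ▸ (hf (s - 1) s).2 (sub_add_cancel s 1).symm
  rw [(hf (s - 1) t).1 hprev, sub_add_cancel]

theorem IsInducedCycle.two_le {k : ℕ} {f : Fin (k + 1) → α} (hf : IsInducedCycle r f)
    (hr : ∀ x y, r x y → ¬ r y x) : 2 ≤ k := by
  by_contra! hk
  have hwrap : (1 + 1 : Fin (k + 1)) = 0 := by interval_cases k <;> decide
  exact hr _ _ ((hf 0 1).2 (zero_add 1).symm) (hwrap ▸ (hf 1 (1 + 1)).2 rfl)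

theorem IsClosedWalk.exists_shorter {k : ℕ} {f : Fin (k + 1) → α} (hf : IsClosedWalk r f)
    {a b : Fin (k + 1)} (hab : r (f a) (f b)) (hb : b ≠ a + 1) :
    ∃ k' < k, ∃ g : Fin (k' + 1) → α, IsClosedWalk r g := by
  have hd : (a - b : Fin (k + 1)).val < k := by
    refine lt_of_le_of_ne (Nat.lt_succ_iff.mp (a - b).isLt) fun hlast => hb ?_
    have : a - b = -1 := Fin.ext (by rw [hlast, Fin.coe_neg_one])
    rw [← sub_add_cancel a b, this, neg_add_cancel_comm]
  set d := (a - b : Fin (k + 1)).val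
  -- The shorter walk runs along `f` from `f b` to `f a = f (b + d)` and returns by the chord.
  have hle : d + 1 ≤ k + 1 := by omega
  refine ⟨d, hd, fun j => f (b + Fin.castLE hle j), fun j => ?_⟩
  induction j using Fin.lastCases with
  | last =>
    have hcast : Fin.castLE hle (Fin.last d) = a - b := Fin.ext rfl
    simpa only [Fin.last_add_one, hcast, add_sub_cancel, Fin.castLE_zero, add_zero] using hab
  | cast i =>
    have hcast : Fin.castLE hle i.succ = Fin.castLE hle i.castSucc + 1 := by
      ext
      simp only [Fin.val_castLE, Fin.val_succ, Fin.val_castSucc, Fin.val_add, Fin.val_one']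
      rw [Nat.mod_eq_of_lt (show 1 < k + 1 by omega), Nat.mod_eq_of_lt (by omega)]
    simpa only [Fin.coeSucc_eq_succ, hcast, ← add_assoc] using hf (b + Fin.castLE hle i.castSucc)

theorem IsClosedWalk.exists_isInducedCycle {k : ℕ} {f : Fin (k + 1) → α}
    (hf : IsClosedWalk r f) : ∃ (k' : ℕ) (g : Fin (k' + 1) → α), IsInducedCycle r g := by
  induction k using Nat.strong_induction_on with
  | _ k ih =>
    by_cases hchord : ∃ a b, r (f a) (f b) ∧ b ≠ a + 1
    · obtain ⟨a, b, hab, hb⟩ := hchord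
      obtain ⟨k', hk', g, hg⟩ := hf.exists_shorter hab hb
      exact ih k' hk' hg
    · push Not at hchord
      exact ⟨k, f, fun a b => ⟨hchord a b, fun h => h ▸ hf a⟩⟩

theorem exists_isClosedWalk [Finite α] [Nonempty α] (h : ∀ x, ∃ y, r x y) :
    ∃ (k : ℕ) (f : Fin (k + 1) → α), IsClosedWalk r f := by
  choose τ hτ using h
  obtain ⟨x⟩ := ‹Nonempty α›
  obtain ⟨i, j, hij, heq⟩ := Finite.exists_ne_map_eq_of_infinite (τ^[·] x)
  wlog hlt : i < j generalizing i j
  · exact this j i hij.symm heq.symm (by omega)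
  have hper : Function.IsPeriodicPt τ (j - i - 1 + 1) (τ^[i] x) := by
    rw [Function.IsPeriodicPt, Function.IsFixedPt, ← Function.iterate_add_apply,
      show j - i - 1 + 1 + i = j by omega]
    exact heq.symm
  refine ⟨j - i - 1, fun s => τ^[s] (τ^[i] x), fun s => ?_⟩
  dsimp only
  rw [Fin.val_add, Fin.val_one', Nat.add_mod_mod, hper.iterate_mod_apply,
    Function.iterate_succ_apply']
  exact hτ _

end ClosedWalk

theorem Matrix.exists_pos_of_det_posPart_ne_zero {ι : Type*} [Fintype ι] [DecidableEq ι]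
    {R : Type*} [CommRing R] [LinearOrder R] (M : Matrix ι ι R)
    (hdet : (Matrix.of fun i j => max (M i j) 0).det ≠ 0) (i : ι) : ∃ j, 0 < M i j := by
  by_contra! hrow
  exact hdet (Matrix.det_eq_zero_of_row_eq_zero i fun j => max_eq_right (hrow j))

theorem SkewSymmetrizable.pos_iff_neg {n : ℕ} {B : Matrix (Fin n) (Fin n) ℤ}
    (hB : SkewSymmetrizable B) (i j : Fin n) : 0 < B i j ↔ B j i < 0 := by
  obtain ⟨d, hd, hskew⟩ := hB
  rw [← mul_pos_iff_of_pos_left (hd i), hskew i j, neg_pos]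
  exact ⟨fun h => neg_of_mul_neg_right h (hd j).le, mul_neg_of_pos_of_neg (hd j)⟩

theorem stmt1 {n : ℕ} (B : Matrix (Fin n) (Fin n) ℤ) (hB : SkewSymmetrizable B)
    (I : Finset (Fin n)) (hI : I.Nonempty)
    (hdet : Matrix.det (Matrix.of fun i j : I => max (B (i : Fin n) (j : Fin n)) 0) ≠ 0) :
    ∃ (m : ℕ) (f : Fin (m + 3) → Fin n),
      Function.Injective f ∧
      (∀ s, f s ∈ I) ∧
      (∀ s : Fin (m + 3), 0 < B (f s) (f (s + 1))) ∧
      (∀ s t : Fin (m + 3), t ≠ s → t ≠ s + 1 → s ≠ t + 1 → B (f s) (f t) = 0) := by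
  have : Nonempty I := hI.coe_sort
  obtain ⟨k₀, f₀, hf₀⟩ := exists_isClosedWalk (r := fun i j : I => 0 < B i j)
    (Matrix.exists_pos_of_det_posPart_ne_zero _ hdet)
  obtain ⟨k, f, hf⟩ := hf₀.exists_isInducedCycle
  obtain ⟨m, rfl⟩ : ∃ m, k = m + 2 :=
    ⟨k - 2, by have := hf.two_le fun i j hij hji => ((hB.pos_iff_neg i j).1 hij).not_gt hji; omega⟩
  refine ⟨m, fun s => f s, Subtype.val_injective.comp hf.injective, fun s => (f s).2,
    fun s => (hf s (s + 1)).2 rfl, fun s t _ hts hst => ?_⟩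
  rcases lt_trichotomy (B (f s) (f t)) 0 with hneg | hzero | hpos
  · exact absurd ((hf t s).1 ((hB.pos_iff_neg _ _).2 hneg)) hst
  · exact hzero
  · exact absurd ((hf s t).1 hpos) hts
end

section
/- Let B = (b_{ij}) be an n×n integer skew-symmetrizable matrix and h = max_{1≤i≤n} Σ_{j=1}^n |b_{ij}|. If h·i (where i = √−1) is a complex eigenvalue of B (equivalently, the exchange spectrum radius of B equals h), then there exists a nonempty subset S ⊆ {1,…,n} such that: (a) b_{ij} = 0 whenever i ∈ S and j ∉ S; (b) the underlying graph of B restricted to S is connected; and (c) Σ_{j∈S} |b_{ij}| = h for every i ∈ S. -/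
/-!
Take an eigenvector `v` of `B` for the eigenvalue `h i` and an index `i₀` where `|v i|` is maximal.
In row `i₀`, `h |v i₀| = |∑ⱼ b_{i₀ j} v j| ≤ ∑ⱼ |b_{i₀ j}| |v j| ≤ h |v i₀|`, so equality holds
throughout: the row sum is `h`, and `|v j|` is again maximal for every `j` with `b_{i₀ j} ≠ 0`.
Hence both properties propagate along the support graph, and `S` is the set of indices reachable
from `i₀`; it is connected because the support of a skew-symmetrizable matrix is symmetric.
-/

open Relation Finset

theorem Relation.ReflTransGen.restrict_reachable {α : Type*} {r : α → α → Prop} {a b : α}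
    (h : ReflTransGen r a b) :
    ReflTransGen (fun x y => ReflTransGen r a x ∧ ReflTransGen r a y ∧ r x y) a b := by
  induction h with
  | refl => rfl
  | tail hab hbc ih => exact ih.tail ⟨hab, hab.tail hbc, hbc⟩

theorem Relation.ReflTransGen.restrict_reachable_of_symm {α : Type*} {r : α → α → Prop}
    [Std.Symm r] {a x y : α} (hx : ReflTransGen r a x) (hy : ReflTransGen r a y) :
    ReflTransGen (fun u v => ReflTransGen r a u ∧ ReflTransGen r a v ∧ r u v) x y := by
  have : Std.Symm (fun u v => ReflTransGen r a u ∧ ReflTransGen r a v ∧ r u v) :=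
    ⟨fun _ _ ⟨hu, hv, huv⟩ => ⟨hv, hu, symm huv⟩⟩
  exact (symm hx.restrict_reachable).trans hy.restrict_reachable

theorem SkewSymmetrizable.symm_support {n : ℕ} {B : Matrix (Fin n) (Fin n) ℤ}
    (hB : SkewSymmetrizable B) : Std.Symm fun i j => B i j ≠ 0 := by
  obtain ⟨d, hd, hdB⟩ := hB
  refine ⟨fun i j hij hji => ?_⟩
  simpa [hji, (hd i).ne', hij] using hdB i j

namespace Matrix

variable {ι : Type*} [Fintype ι]

theorem exists_mulVec_eq_smul_of_isRoot_charpoly {K : Type*} [Field K] [DecidableEq ι]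
    {A : Matrix ι ι K} {μ : K} (hμ : A.charpoly.IsRoot μ) : ∃ v ≠ 0, A *ᵥ v = μ • v := by
  rw [← charpoly_toLin', ← Module.End.hasEigenvalue_iff_isRoot_charpoly] at hμ
  obtain ⟨v, hv, hv0⟩ := hμ.exists_hasEigenvector
  exact ⟨v, hv0, by simpa using hv⟩

variable {𝕜 : Type*} [NormedField 𝕜] {A : Matrix ι ι 𝕜} {v : ι → 𝕜} {μ : 𝕜} {i : ι}

theorem norm_mul_norm_le_sum_norm_mul (hv : A *ᵥ v = μ • v) (i : ι) :
    ‖μ‖ * ‖v i‖ ≤ ∑ j, ‖A i j‖ * ‖v j‖ :=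
  calc ‖μ‖ * ‖v i‖ = ‖∑ j, A i j * v j‖ := by
        rw [← norm_mul, ← smul_eq_mul, ← Pi.smul_apply, ← hv]; rfl
    _ ≤ ∑ j, ‖A i j * v j‖ := norm_sum_le _ _
    _ = ∑ j, ‖A i j‖ * ‖v j‖ := by simp_rw [norm_mul]

theorem sum_norm_mul_le_of_forall_norm_le (hmax : ∀ j, ‖v j‖ ≤ ‖v i‖) :
    ∑ j, ‖A i j‖ * ‖v j‖ ≤ (∑ j, ‖A i j‖) * ‖v i‖ := by
  rw [sum_mul]
  exact sum_le_sum fun j _ => mul_le_mul_of_nonneg_left (hmax j) (norm_nonneg _)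

theorem sum_norm_eq_of_mulVec_eq_smul (hv : A *ᵥ v = μ • v) (hmax : ∀ j, ‖v j‖ ≤ ‖v i‖)
    (hrow : ∑ j, ‖A i j‖ ≤ ‖μ‖) (hvi : v i ≠ 0) : ∑ j, ‖A i j‖ = ‖μ‖ :=
  hrow.antisymm <| le_of_mul_le_mul_right
    ((norm_mul_norm_le_sum_norm_mul hv i).trans (sum_norm_mul_le_of_forall_norm_le hmax))
    (norm_pos_iff.mpr hvi)

theorem norm_apply_eq_of_mulVec_eq_smul (hv : A *ᵥ v = μ • v) (hmax : ∀ j, ‖v j‖ ≤ ‖v i‖)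
    (hrow : ∑ j, ‖A i j‖ ≤ ‖μ‖) {j : ι} (hij : A i j ≠ 0) : ‖v j‖ = ‖v i‖ := by
  have hterm_nonneg : ∀ k ∈ univ, 0 ≤ ‖A i k‖ * (‖v i‖ - ‖v k‖) := fun k _ =>
    mul_nonneg (norm_nonneg _) (sub_nonneg.mpr (hmax k))
  have hdefect : ∑ k, ‖A i k‖ * (‖v i‖ - ‖v k‖) = 0 := by
    refine le_antisymm ?_ (sum_nonneg hterm_nonneg)
    have hlower := norm_mul_norm_le_sum_norm_mul hv i
    have hupper := mul_le_mul_of_nonneg_right hrow (norm_nonneg (v i))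
    simp only [mul_sub, sum_sub_distrib, ← sum_mul]
    linarith
  have hterm := (sum_eq_zero_iff_of_nonneg hterm_nonneg).mp hdefect j (mem_univ j)
  rw [mul_eq_zero, norm_eq_zero, sub_eq_zero] at hterm
  exact (hterm.resolve_left hij).symm

theorem norm_apply_eq_of_reflTransGen (hv : A *ᵥ v = μ • v) (hmax : ∀ j, ‖v j‖ ≤ ‖v i‖)
    (hrows : ∀ k, ∑ j, ‖A k j‖ ≤ ‖μ‖) {j : ι} (hij : ReflTransGen (fun a b => A a b ≠ 0) i j) :
    ‖v j‖ = ‖v i‖ := by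
  induction hij with
  | refl => rfl
  | tail _ hbc ih =>
    exact (norm_apply_eq_of_mulVec_eq_smul hv (ih ▸ hmax) (hrows _) hbc).trans ih

theorem exists_forall_reflTransGen_sum_norm_eq (hv : A *ᵥ v = μ • v) (hv0 : v ≠ 0)
    (hrows : ∀ k, ∑ j, ‖A k j‖ ≤ ‖μ‖) :
    ∃ i, ∀ j, ReflTransGen (fun a b => A a b ≠ 0) i j → ∑ k, ‖A j k‖ = ‖μ‖ := by
  obtain ⟨k, hk⟩ := Function.ne_iff.mp hv0
  obtain ⟨i, -, hi⟩ := exists_max_image univ (‖v ·‖) ⟨k, mem_univ k⟩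
  have hmax j : ‖v j‖ ≤ ‖v i‖ := hi j (mem_univ j)
  have hvi : ‖v i‖ ≠ 0 := ((norm_pos_iff.mpr hk).trans_le (hmax k)).ne'
  refine ⟨i, fun j hij => ?_⟩
  have hvj := norm_apply_eq_of_reflTransGen hv hmax hrows hij
  exact sum_norm_eq_of_mulVec_eq_smul hv (hvj ▸ hmax) (hrows j) (norm_ne_zero_iff.mp (hvj ▸ hvi))

end Matrix

open Matrix

theorem stmt3 {n : ℕ} (B : Matrix (Fin n) (Fin n) ℤ) (hB : SkewSymmetrizable B)
    (h : ℤ) (hh : IsGreatest {x : ℤ | ∃ i : Fin n, x = ∑ j, |B i j|} h)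
    (heig : (Matrix.charpoly (B.map (Int.cast : ℤ → ℂ))).IsRoot ((h : ℂ) * Complex.I)) :
    ∃ S : Finset (Fin n), S.Nonempty ∧
      (∀ i ∈ S, ∀ j ∉ S, B i j = 0) ∧
      (∀ i ∈ S, ∀ j ∈ S,
        Relation.ReflTransGen (fun a b => a ∈ S ∧ b ∈ S ∧ B a b ≠ 0) i j) ∧
      (∀ i ∈ S, ∑ j ∈ S, |B i j| = h) := by
  classical
  have hrow i : ∑ j, ‖B.map (Int.cast : ℤ → ℂ) i j‖ = ((∑ j, |B i j| : ℤ) : ℝ) := by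
    simp [Complex.norm_intCast]
  have hμ : ‖(h : ℂ) * Complex.I‖ = h := by
    obtain ⟨i, hi⟩ := hh.1
    simpa [Complex.norm_intCast] using hi ▸ sum_nonneg fun j _ => abs_nonneg (B i j)
  obtain ⟨v, hv0, hv⟩ := exists_mulVec_eq_smul_of_isRoot_charpoly heig
  obtain ⟨i₀, hi₀⟩ := exists_forall_reflTransGen_sum_norm_eq hv hv0 fun k => by
    rw [hrow, hμ]; exact_mod_cast hh.2 ⟨k, rfl⟩
  have hsupp : (fun a b => B.map (Int.cast : ℤ → ℂ) a b ≠ 0) = fun a b => B a b ≠ 0 := by simp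
  simp only [hsupp, hrow, hμ, Int.cast_inj] at hi₀
  set S := univ.filter (ReflTransGen (fun a b => B a b ≠ 0) i₀)
  have hS j : j ∈ S ↔ ReflTransGen (fun a b => B a b ≠ 0) i₀ j := by simp [S]
  have hclosed : ∀ i ∈ S, ∀ j ∉ S, B i j = 0 := fun i hi j hj => by
    by_contra hij
    exact hj ((hS j).mpr (((hS i).mp hi).tail hij))
  refine ⟨S, ⟨i₀, (hS i₀).mpr .refl⟩, hclosed, fun i hi j hj => ?_, fun i hi => ?_⟩
  · have := hB.symm_support
    simp_rw [hS]
    exact ((hS i).mp hi).restrict_reachable_of_symm ((hS j).mp hj)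
  · rw [← hi₀ i ((hS i).mp hi)]
    exact sum_subset (subset_univ S) fun j _ hj => by rw [hclosed i hi j hj, abs_zero]
end

section
/- Let B = (b_{ij}) be an n×n integer skew-symmetrizable matrix whose underlying graph is a tree, and let C = (|b_{ij}|). If n is odd, then det(B) = 0 = det(C). If n is even, then det(B) = (−1)^{n/2}·det(C). -/
/-- The underlying (simple) graph of a matrix `B`: an edge between `i` and `j`
exactly when `B i j ≠ 0`. -/
def underlyingGraph {n : ℕ} (B : Matrix (Fin n) (Fin n) ℤ) : SimpleGraph (Fin n) :=
  SimpleGraph.fromRel (fun i j => B i j ≠ 0)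

/-!
In the Leibniz expansion `det B = ∑ σ, sign σ * ∏ i, B (σ i) i`, a nonzero term forces every
`s(i, σ i)` to be an edge of the underlying graph (in particular `σ` has no fixed points, as the
diagonal of `B` vanishes). In a tree every edge is a bridge, so `σ` can have no cycle of length
at least three: it is a fixed-point-free involution. Hence `n` is even and the term is a product
of `n / 2` factors `B i j * B j i = -|B i j| * |B j i|`, the sign coming from skew-symmetrizability.
-/

open Finset Function

namespace SimpleGraph

variable {V : Type*} {G : SimpleGraph V} {f : V → V}

lemma exists_walk_iterate (hadj : ∀ v, G.Adj v (f v)) (x : V) (k : ℕ) :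
    ∃ p : G.Walk x (f^[k] x), ∀ e ∈ p.edges, ∃ j < k, e = s(f^[j] x, f^[j + 1] x) := by
  induction k with
  | zero => exact ⟨.nil, by simp⟩
  | succ k ih =>
    obtain ⟨p, hp⟩ := ih
    have hlast : G.Adj (f^[k] x) (f^[k + 1] x) := by
      rw [iterate_succ_apply']
      exact hadj _
    refine ⟨p.concat hlast, fun e he => ?_⟩
    rw [Walk.edges_concat, List.concat_eq_append, List.mem_append, List.mem_singleton] at he
    rcases he with he | rfl
    · obtain ⟨j, hj, rfl⟩ := hp e he
      exact ⟨j, by omega, rfl⟩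
    · exact ⟨k, by omega, rfl⟩

/-- Going once around the orbit of `x` from `f x` back to `x` must cross the bridge `s(x, f x)`,
which forces `f (f x) = x`. -/
lemma IsAcyclic.apply_apply_eq_of_mem_periodicPts (hG : G.IsAcyclic)
    (hadj : ∀ v, G.Adj v (f v)) {x : V} (hx : x ∈ periodicPts f) : f (f x) = x := by
  set m := minimalPeriod f x
  have hm : 0 < m := minimalPeriod_pos_of_mem_periodicPts hx
  obtain ⟨p, hp⟩ := exists_walk_iterate hadj (f x) (m - 1)
  have hend : f^[m - 1] (f x) = x := by
    rw [← iterate_succ_apply, Nat.succ_eq_add_one, Nat.sub_add_cancel hm]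
    exact iterate_minimalPeriod
  have hbridge : G.IsBridge s(f x, x) :=
    isAcyclic_iff_forall_adj_isBridge.1 hG (hadj x).symm
  have hmem := isBridge_iff_forall_walk_mem_edges.1 hbridge (p.copy rfl hend)
  rw [Walk.edges_copy] at hmem
  obtain ⟨j, hj, he⟩ := hp _ hmem
  simp only [← iterate_succ_apply, Nat.succ_eq_add_one] at he
  have hinj := iterate_injOn_Iio_minimalPeriod (f := f) (x := x)
  rcases Sym2.eq_iff.1 he with ⟨h1, h2⟩ | ⟨_, h2⟩
  · have : 1 = j + 1 := hinj (Set.mem_Iio.2 (by omega)) (Set.mem_Iio.2 (by omega)) h1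
    obtain rfl : j = 0 := by omega
    exact h2.symm
  · have : 0 = j + 1 := hinj (Set.mem_Iio.2 hm) (Set.mem_Iio.2 (by omega)) h2
    omega

lemma IsAcyclic.involutive_of_forall_adj [Finite V] (hG : G.IsAcyclic) (σ : Equiv.Perm V)
    (hadj : ∀ v, G.Adj v (σ v)) : Involutive σ := fun x =>
  hG.apply_apply_eq_of_mem_periodicPts hadj (σ.injective.mem_periodicPts x)

end SimpleGraph

lemma Finset.exists_prod_eq_pow_mul_prod_of_involution {α M : Type*} [DecidableEq α]
    [CommMonoid M] (s : Finset α) (σ : α → α) (hmem : ∀ i ∈ s, σ i ∈ s)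
    (hinv : ∀ i ∈ s, σ (σ i) = i) (hne : ∀ i ∈ s, σ i ≠ i) {f g : α → M} {c : M}
    (hpair : ∀ i ∈ s, f i * f (σ i) = c * (g i * g (σ i))) :
    ∃ k, #s = 2 * k ∧ ∏ i ∈ s, f i = c ^ k * ∏ i ∈ s, g i := by
  induction s using Finset.strongInduction with
  | H s ih =>
  rcases s.eq_empty_or_nonempty with rfl | ⟨i, hi⟩
  · exact ⟨0, by simp⟩
  have hσi : σ i ∈ s.erase i := mem_erase.2 ⟨hne i hi, hmem i hi⟩
  set t := (s.erase i).erase (σ i)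
  have ht : ∀ j, j ∈ t ↔ j ≠ σ i ∧ j ≠ i ∧ j ∈ s := by simp [t]
  have hts : t ⊂ s := (erase_ssubset hσi).trans (erase_ssubset hi)
  have htmem : ∀ j ∈ t, σ j ∈ t := by
    intro j hj
    obtain ⟨hji, hjσ, hjs⟩ := (ht j).1 hj
    refine (ht _).2 ⟨fun h => hjσ ?_, fun h => hji ?_, hmem j hjs⟩
    · rw [← hinv j hjs, h, hinv i hi]
    · rw [← hinv j hjs, h]
  obtain ⟨k, hk, hprod⟩ := ih t hts htmem (fun j hj => hinv j (hts.subset hj))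
    (fun j hj => hne j (hts.subset hj)) (fun j hj => hpair j (hts.subset hj))
  have hsplit : ∀ h : α → M, ∏ j ∈ s, h j = h i * h (σ i) * ∏ j ∈ t, h j := fun h => by
    rw [mul_assoc, mul_prod_erase _ _ hσi, mul_prod_erase _ _ hi]
  refine ⟨k + 1, ?_, ?_⟩
  · rw [← card_erase_add_one hi, ← card_erase_add_one hσi, hk]
    ring
  · rw [hsplit f, hsplit g, hpair i hi, hprod, pow_succ', mul_mul_mul_comm]

namespace SkewSymmetrizable

variable {n : ℕ} {B : Matrix (Fin n) (Fin n) ℤ}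

lemma apply_mul_apply_swap_nonpos (hB : SkewSymmetrizable B) (i j : Fin n) :
    B i j * B j i ≤ 0 := by
  obtain ⟨d, hd, hskew⟩ := hB
  have h : d j * (B i j * B j i) = -(d i * B i j ^ 2) := by
    linear_combination B i j * hskew i j
  have : d j * (B i j * B j i) ≤ 0 := h ▸ neg_nonpos.2 (by have := hd i; positivity)
  exact nonpos_of_mul_nonpos_right this (hd j)

lemma apply_self (hB : SkewSymmetrizable B) (i : Fin n) : B i i = 0 :=
  mul_self_eq_zero.1 <| (hB.apply_mul_apply_swap_nonpos i i).antisymm (mul_self_nonneg _)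

lemma apply_mul_apply_swap (hB : SkewSymmetrizable B) (i j : Fin n) :
    B i j * B j i = -(|B i j| * |B j i|) := by
  rw [← abs_mul, abs_of_nonpos (hB.apply_mul_apply_swap_nonpos i j), neg_neg]

lemma exists_prod_apply_perm_eq_of_prod_abs_ne_zero (hB : SkewSymmetrizable B)
    (hG : (underlyingGraph B).IsAcyclic) (σ : Equiv.Perm (Fin n))
    (hσ : ∏ i, |B (σ i) i| ≠ 0) :
    ∃ k, n = 2 * k ∧ ∏ i, B (σ i) i = (-1) ^ k * ∏ i, |B (σ i) i| := by
  have hB0 : ∀ i, B (σ i) i ≠ 0 := fun i => abs_ne_zero.1 (prod_ne_zero_iff.1 hσ i (mem_univ i))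
  have hne : ∀ i, σ i ≠ i := fun i h => hB0 i (by rw [h]; exact hB.apply_self i)
  have hadj : ∀ i, (underlyingGraph B).Adj i (σ i) := fun i =>
    (SimpleGraph.fromRel_adj _ _ _).2 ⟨(hne i).symm, Or.inr (hB0 i)⟩
  have hinv := hG.involutive_of_forall_adj σ hadj
  obtain ⟨k, hk, hprod⟩ := univ.exists_prod_eq_pow_mul_prod_of_involution σ
    (fun i _ => mem_univ _) (fun i _ => hinv i) (fun i _ => hne i)
    (f := fun i => B (σ i) i) (g := fun i => |B (σ i) i|) (c := -1) fun i _ => by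
      simp only [hinv i]
      rw [mul_comm, hB.apply_mul_apply_swap, neg_one_mul, mul_comm |B i (σ i)|]
  exact ⟨k, by simpa using hk, hprod⟩

lemma prod_abs_apply_perm_eq_zero_of_odd (hB : SkewSymmetrizable B)
    (hG : (underlyingGraph B).IsAcyclic) (σ : Equiv.Perm (Fin n)) (hn : Odd n) :
    ∏ i, |B (σ i) i| = 0 := by
  by_contra hσ
  obtain ⟨k, rfl, -⟩ := hB.exists_prod_apply_perm_eq_of_prod_abs_ne_zero hG σ hσ
  exact Nat.not_odd_iff_even.2 (even_two_mul k) hn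

lemma prod_apply_perm_eq (hB : SkewSymmetrizable B) (hG : (underlyingGraph B).IsAcyclic)
    (σ : Equiv.Perm (Fin n)) :
    ∏ i, B (σ i) i = (-1) ^ (n / 2) * ∏ i, |B (σ i) i| := by
  by_cases hσ : ∏ i, |B (σ i) i| = 0
  · rw [hσ, mul_zero, ← abs_eq_zero, abs_prod, hσ]
  · obtain ⟨k, rfl, hprod⟩ := hB.exists_prod_apply_perm_eq_of_prod_abs_ne_zero hG σ hσ
    rwa [Nat.mul_div_cancel_left k two_pos]

end SkewSymmetrizable

theorem stmt4 {n : ℕ} (B : Matrix (Fin n) (Fin n) ℤ) (hB : SkewSymmetrizable B)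
    (htree : (underlyingGraph B).IsTree) :
    (Odd n → B.det = 0 ∧ Matrix.det (Matrix.of fun i j => |B i j|) = 0) ∧
    (Even n → B.det = (-1) ^ (n / 2) * Matrix.det (Matrix.of fun i j => |B i j|)) := by
  have hterm := hB.prod_apply_perm_eq htree.isAcyclic
  refine ⟨fun hn => ?_, fun _ => ?_⟩
  · have hzero := fun σ => hB.prod_abs_apply_perm_eq_zero_of_odd htree.isAcyclic σ hn
    simp [Matrix.det_apply', hterm, hzero]
  · simp only [Matrix.det_apply', Matrix.of_apply, hterm, mul_sum, mul_left_comm]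
end

section
/- Let B = (b_{ij}) be an n×n integer skew-symmetrizable matrix whose underlying graph is a tree, let C = (|b_{ij}|), and let f(X) = det(X·I_n − B) and g(X) = det(X·I_n − C) be their characteristic polynomials, regarded over ℂ. Then f(i·X) = i^n · g(X) as polynomials in ℂ[X] (where i = √−1). In particular, for every real number λ, the number λ·i is an eigenvalue of B if and only if λ is an eigenvalue of C, and these eigenvalues have equal multiplicities. -/
open Polynomial SimpleGraph

namespace Stmt5Aux

variable {n : ℕ} {B : Matrix (Fin n) (Fin n) ℤ}

lemma bne (hB : SkewSymmetrizable B) {i j : Fin n} (h : B i j ≠ 0) : B j i ≠ 0 := by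
  obtain ⟨d, hd, hsk⟩ := hB
  intro h0
  have h1 := hsk j i
  rw [h0, mul_zero] at h1
  have : d i * B i j = 0 := by linarith
  rcases mul_eq_zero.1 this with h2 | h2
  · exact (hd i).ne' h2
  · exact h h2

lemma bdiag (hB : SkewSymmetrizable B) (i : Fin n) : B i i = 0 := by
  obtain ⟨d, hd, hsk⟩ := hB
  have h1 := hsk i i
  have : d i * B i i = 0 := by linarith
  rcases mul_eq_zero.1 this with h2 | h2
  · exact absurd h2 (hd i).ne'
  · exact h2

lemma bmul_neg (hB : SkewSymmetrizable B) {i j : Fin n} (h : B i j ≠ 0) :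
    B i j * B j i < 0 := by
  have hji := bne hB h
  obtain ⟨d, hd, hsk⟩ := hB
  have h1 := hsk i j
  have h2 : d i * (B i j * B j i) = -(d j * (B j i * B j i)) := by
    have := congrArg (· * B j i) h1
    simpa [mul_assoc, mul_comm, mul_left_comm] using this
  have hpos : 0 < B j i * B j i := mul_self_pos.mpr hji
  nlinarith [hd i, hd j]

lemma adj_ne {i j : Fin n} (hB : SkewSymmetrizable B)
    (h : (underlyingGraph B).Adj i j) : B i j ≠ 0 := by
  rw [underlyingGraph, SimpleGraph.fromRel_adj] at h
  rcases h.2 with h' | h'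
  · exact h'
  · exact bne hB h'

/-- The edge weight. -/
noncomputable def ew (B : Matrix (Fin n) (Fin n) ℤ) (a b : Fin n) : ℂ :=
  Complex.I * ((|B a b| : ℤ) : ℂ) / ((B a b : ℤ) : ℂ)

lemma ew_ne_zero (hB : SkewSymmetrizable B) {a b : Fin n} (h : B a b ≠ 0) :
    ew B a b ≠ 0 := by
  have h1 : ((B a b : ℤ) : ℂ) ≠ 0 := by exact_mod_cast h
  have h2 : ((|B a b| : ℤ) : ℂ) ≠ 0 := by
    simpa using fun hh => h (abs_eq_zero.mp hh)
  simp only [ew, div_ne_zero_iff]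
  exact ⟨mul_ne_zero Complex.I_ne_zero h2, h1⟩

lemma ew_mul_ew (hB : SkewSymmetrizable B) {a b : Fin n} (h : B a b ≠ 0) :
    ew B a b * ew B b a = 1 := by
  have hba := bne hB h
  have hkey : B a b * B b a = -(|B a b| * |B b a|) := by
    rw [← abs_mul]
    have := bmul_neg hB h
    rw [abs_of_neg this]; ring
  have h1 : ((B a b : ℤ) : ℂ) ≠ 0 := by exact_mod_cast h
  have h2 : ((B b a : ℤ) : ℂ) ≠ 0 := by exact_mod_cast hba
  have hkeyC : ((B a b : ℤ) : ℂ) * ((B b a : ℤ) : ℂ) =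
      -(((|B a b| : ℤ) : ℂ) * ((|B b a| : ℤ) : ℂ)) := by
    push_cast
    exact_mod_cast congrArg (Int.cast : ℤ → ℂ) hkey
  rw [ew, ew]
  field_simp
  rw [hkeyC]
  ring_nf
  rw [Complex.I_sq]
  ring

end Stmt5Aux
namespace Stmt5Aux

variable {n : ℕ} {B : Matrix (Fin n) (Fin n) ℤ}

/-- Weight of a walk: product of edge weights `ew B (dart.snd) (dart.fst)`. -/
noncomputable def weight {u v : Fin n} (p : (underlyingGraph B).Walk u v) : ℂ :=
  (p.darts.map fun d => ew B d.toProd.2 d.toProd.1).prod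

@[simp] lemma weight_nil {u : Fin n} :
    weight (SimpleGraph.Walk.nil : (underlyingGraph B).Walk u u) = 1 := by
  simp [weight]

lemma weight_cons {u v w : Fin n} (h : (underlyingGraph B).Adj u v)
    (p : (underlyingGraph B).Walk v w) :
    weight (SimpleGraph.Walk.cons h p) = ew B v u * weight p := by
  simp [weight, SimpleGraph.Walk.darts_cons]

lemma weight_append {u v w : Fin n} (p : (underlyingGraph B).Walk u v)
    (q : (underlyingGraph B).Walk v w) :
    weight (p.append q) = weight p * weight q := by
  simp [weight, SimpleGraph.Walk.darts_append]

lemma weight_concat {u v w : Fin n} (p : (underlyingGraph B).Walk u v)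
    (h : (underlyingGraph B).Adj v w) :
    weight (p.concat h) = weight p * ew B w v := by
  simp [weight, SimpleGraph.Walk.darts_concat]

lemma weight_ne_zero (hB : SkewSymmetrizable B) {u v : Fin n}
    (p : (underlyingGraph B).Walk u v) : weight p ≠ 0 := by
  induction p with
  | nil => simp
  | cons h p ih =>
    rw [weight_cons]
    exact mul_ne_zero (ew_ne_zero hB (adj_ne hB h.symm)) ih

variable (htree : (underlyingGraph B).IsTree)

/-- The unique path between two vertices of the tree. -/
noncomputable def tpath (u v : Fin n) : (underlyingGraph B).Walk u v :=
  (htree.existsUnique_path u v).exists.choose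

lemma tpath_isPath (u v : Fin n) : (tpath htree u v).IsPath :=
  (htree.existsUnique_path u v).exists.choose_spec

lemma tpath_unique {u v : Fin n} (p : (underlyingGraph B).Walk u v)
    (hp : p.IsPath) : p = tpath htree u v :=
  (htree.existsUnique_path u v).unique hp (tpath_isPath htree u v)

/-- The conjugating diagonal entries. -/
noncomputable def dd (r v : Fin n) : ℂ := weight (tpath htree r v)

lemma dd_ne_zero (hB : SkewSymmetrizable B) (r v : Fin n) : dd htree r v ≠ 0 :=
  weight_ne_zero hB _

lemma dd_adj (hB : SkewSymmetrizable B) (r : Fin n) {u v : Fin n}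
    (h : (underlyingGraph B).Adj u v) :
    dd htree r v = ew B v u * dd htree r u := by
  have hBuv : B u v ≠ 0 := adj_ne hB h
  set p := tpath htree r u with hpdef
  have hp : p.IsPath := tpath_isPath htree r u
  by_cases hv : v ∈ p.support
  · -- v is on the path r → u : the path to v is a prefix
    have hq : p.takeUntil v hv = tpath htree r v := tpath_unique htree _ (hp.takeUntil hv)
    have hsingle : (SimpleGraph.Walk.cons h.symm SimpleGraph.Walk.nil :
        (underlyingGraph B).Walk v u).IsPath := by
      rw [SimpleGraph.Walk.cons_isPath_iff]
      exact ⟨SimpleGraph.Walk.IsPath.nil, by simp [h.ne']⟩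
    have hdrop : p.dropUntil v hv = SimpleGraph.Walk.cons h.symm SimpleGraph.Walk.nil :=
      (htree.existsUnique_path v u).unique (hp.dropUntil hv) hsingle
    have hsplit := congrArg weight (p.take_spec hv)
    rw [weight_append, hq, hdrop, weight_cons, weight_nil] at hsplit
    -- hsplit : dd v * (ew u v * 1) = dd u
    have := ew_mul_ew hB hBuv
    calc dd htree r v = dd htree r v * (ew B u v * ew B v u) := by rw [this]; ring
      _ = ew B v u * weight p := by
          rw [← hsplit]; unfold dd; ring
      _ = ew B v u * dd htree r u := rfl
  · -- v is not on the path : extend the path by the edge u → v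
    have hcon : (p.concat h).IsPath := by
      rw [← SimpleGraph.Walk.isPath_reverse_iff, SimpleGraph.Walk.reverse_concat]
      rw [SimpleGraph.Walk.cons_isPath_iff]
      refine ⟨(SimpleGraph.Walk.isPath_reverse_iff p).mpr hp, ?_⟩
      rw [SimpleGraph.Walk.support_reverse, List.mem_reverse]
      exact hv
    have hq : p.concat h = tpath htree r v := tpath_unique htree _ hcon
    unfold dd
    rw [← hq, weight_concat]
    ring

end Stmt5Aux
namespace Stmt5Aux

open Polynomial Matrix

lemma eval_charpoly {n : ℕ} (M : Matrix (Fin n) (Fin n) ℂ) (x : ℂ) :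
    M.charpoly.eval x = (x • (1 : Matrix (Fin n) (Fin n) ℂ) - M).det := by
  rw [Matrix.charpoly, ← coe_evalRingHom, RingHom.map_det]
  congr 1
  ext i j
  by_cases h : i = j
  · subst h
    simp [charmatrix_apply_eq, Matrix.one_apply_eq]
  · simp [charmatrix_apply_ne _ _ _ h, Matrix.one_apply_ne h]

variable {n : ℕ} {B : Matrix (Fin n) (Fin n) ℤ}

lemma det_conj (hB : SkewSymmetrizable B) (htree : (underlyingGraph B).IsTree) (x : ℂ) :
    (x • (1 : Matrix (Fin n) (Fin n) ℂ) + Complex.I • B.map (Int.cast : ℤ → ℂ)).det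
      = (x • (1 : Matrix (Fin n) (Fin n) ℂ)
          - (Matrix.of fun i j => |B i j|).map (Int.cast : ℤ → ℂ)).det := by
  have hne : Nonempty (Fin n) := htree.isConnected.nonempty
  obtain ⟨r⟩ := hne
  set d : Fin n → ℂ := dd htree r with hd
  set M := x • (1 : Matrix (Fin n) (Fin n) ℂ) + Complex.I • B.map (Int.cast : ℤ → ℂ) with hM
  set N := x • (1 : Matrix (Fin n) (Fin n) ℂ)
      - (Matrix.of fun i j => |B i j|).map (Int.cast : ℤ → ℂ) with hN
  have hcomm : Matrix.diagonal d * M = N * Matrix.diagonal d := by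
    ext i j
    rw [Matrix.diagonal_mul, Matrix.mul_diagonal]
    by_cases h : i = j
    · subst h
      simp [hM, hN, Matrix.one_apply_eq, bdiag hB i, mul_comm]
    · by_cases hb : B i j = 0
      · simp [hM, hN, Matrix.one_apply_ne h, hb, abs_eq_zero.mpr hb]
      · have hadj : (underlyingGraph B).Adj j i := by
          rw [underlyingGraph, SimpleGraph.fromRel_adj]
          exact ⟨fun hh => h (hh.symm), Or.inr hb⟩
        have hrel : d i = ew B i j * d j := dd_adj htree hB r hadj
        have hbC : ((B i j : ℤ) : ℂ) ≠ 0 := by exact_mod_cast hb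
        simp only [hM, hN, Matrix.add_apply, Matrix.sub_apply, Matrix.smul_apply,
          Matrix.one_apply_ne h, Matrix.map_apply, Matrix.of_apply, smul_eq_mul,
          mul_zero, zero_add, zero_sub]
        rw [hrel, ew]
        have hsq : Complex.I * Complex.I = -1 := Complex.I_mul_I
        field_simp
        ring_nf
        rw [Complex.I_sq]
        ring
  have hdet := congrArg Matrix.det hcomm
  rw [Matrix.det_mul, Matrix.det_mul, Matrix.det_diagonal] at hdet
  have hdne : (∏ i, d i) ≠ 0 :=
    Finset.prod_ne_zero_iff.mpr fun i _ => dd_ne_zero htree hB r i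
  exact mul_left_cancel₀ hdne (by rw [hdet]; ring)

lemma rootMultiplicity_comp_C_mul_X {c : ℂ} (hc : c ≠ 0) (p : ℂ[X]) (a : ℂ) :
    rootMultiplicity a (p.comp (C c * X)) = rootMultiplicity (c * a) p := by
  have hcomp : ∀ (q : ℂ[X]) (e : ℂ), (q.comp (C e * X)).comp (C e⁻¹ * X) = q.comp (C (e * e⁻¹) * X) := by
    intro q e
    rw [Polynomial.comp_assoc, Polynomial.mul_comp, Polynomial.C_comp, Polynomial.X_comp,
      ← mul_assoc, ← Polynomial.C_mul]
  have hinv : ∀ q : ℂ[X], (q.comp (C c * X)).comp (C c⁻¹ * X) = q := by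
    intro q
    rw [hcomp, mul_inv_cancel₀ hc, Polynomial.C_1, one_mul, Polynomial.comp_X]
  by_cases hp : p = 0
  · simp [hp]
  have hcne : p.comp (C c * X) ≠ 0 := by
    intro h0
    apply hp
    have := hinv p
    rwa [h0, Polynomial.zero_comp, eq_comm] at this
  -- helper : divisibility transfers along composition
  have helper : ∀ (e b a' : ℂ) (q : ℂ[X]) (m : ℕ), e * a' = b →
      (X - C b) ^ m ∣ q → (X - C a') ^ m ∣ q.comp (C e * X) := by
    rintro e b a' q m hba ⟨s, rfl⟩
    rw [Polynomial.mul_comp, Polynomial.pow_comp, Polynomial.sub_comp, Polynomial.X_comp,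
      Polynomial.C_comp, ← hba]
    refine ⟨C e ^ m * s.comp (C e * X), ?_⟩
    rw [← mul_assoc, ← mul_pow]
    congr 2
    rw [Polynomial.C_mul]
    ring
  apply le_antisymm
  · rw [Polynomial.le_rootMultiplicity_iff hp]
    have h1 : (X - C a) ^ (rootMultiplicity a (p.comp (C c * X))) ∣ p.comp (C c * X) :=
      Polynomial.pow_rootMultiplicity_dvd _ _
    have h2 := helper c⁻¹ a (c * a) (p.comp (C c * X)) _ (by field_simp) h1
    rwa [hinv] at h2
  · rw [Polynomial.le_rootMultiplicity_iff hcne]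
    exact helper c (c * a) a p _ rfl (Polynomial.pow_rootMultiplicity_dvd _ _)

end Stmt5Aux

open Polynomial in
theorem stmt5 {n : ℕ} (B : Matrix (Fin n) (Fin n) ℤ) (hB : SkewSymmetrizable B)
    (htree : (underlyingGraph B).IsTree)
    (f g : ℂ[X])
    (hf : f = Matrix.charpoly (B.map (Int.cast : ℤ → ℂ)))
    (hg : g = Matrix.charpoly ((Matrix.of fun i j => |B i j|).map (Int.cast : ℤ → ℂ))) :
    f.comp (C Complex.I * X) = C (Complex.I ^ n) * g ∧
    ∀ lam : ℝ, rootMultiplicity ((lam : ℂ) * Complex.I) f = rootMultiplicity (lam : ℂ) g := by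
  have hmain : f.comp (C Complex.I * X) = C (Complex.I ^ n) * g := by
    apply Polynomial.funext
    intro x
    rw [eval_comp, eval_mul, eval_C, eval_X, hf, hg, eval_mul, eval_C]
    rw [Stmt5Aux.eval_charpoly, Stmt5Aux.eval_charpoly]
    have heq : (Complex.I * x) • (1 : Matrix (Fin n) (Fin n) ℂ) - B.map (Int.cast : ℤ → ℂ)
        = Complex.I • ((x • (1 : Matrix (Fin n) (Fin n) ℂ))
            + Complex.I • B.map (Int.cast : ℤ → ℂ)) := by
      rw [smul_add, smul_smul, smul_smul, Complex.I_mul_I]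
      ext i j
      simp [sub_eq_add_neg]
    rw [heq, Matrix.det_smul, Fintype.card_fin, Stmt5Aux.det_conj hB htree]
  refine ⟨hmain, fun lam => ?_⟩
  have hg0 : g ≠ 0 := by
    rw [hg]; exact (Matrix.charpoly_monic _).ne_zero
  have h1 : rootMultiplicity ((lam : ℂ) * Complex.I) f
      = rootMultiplicity (lam : ℂ) (f.comp (C Complex.I * X)) := by
    rw [Stmt5Aux.rootMultiplicity_comp_C_mul_X Complex.I_ne_zero f (lam : ℂ), mul_comm]
  rw [h1, hmain, rootMultiplicity_mul, rootMultiplicity_C, zero_add]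
  exact mul_ne_zero (by simp [Complex.I_ne_zero]) hg0
end

section
/- Let B = (b_{ij}) and B' = (b'_{ij}) be n×n integer skew-symmetrizable matrices with connected underlying graph, and let T ⊆ {1,…,n} be a nonempty subset and x ∈ T such that: (a) the underlying graph of B restricted to T is a tree; (b) b_{ij} = 0 whenever i ∈ T∖{x} and j ∉ T; (c) for all i, j, either (b'_{ij}, b'_{ji}) = (b_{ij}, b_{ji}) or (b'_{ij}, b'_{ji}) = (−b_{ij}, −b_{ji}), and the first option holds whenever not both i and j lie in T (i.e., B' is obtained from B by re-orienting only arrows inside T). Then B and B' have the same characteristic polynomial. -/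
/-- The sign of a walk: product of `s u v` over the darts of the walk. -/
def wsign {α : Type*} (s : α → α → ℤ) {G : SimpleGraph α} : {a b : α} → G.Walk a b → ℤ
  | _, _, SimpleGraph.Walk.nil => 1
  | _, _, SimpleGraph.Walk.cons (u := a) (v := c) _ p => s a c * wsign s p

@[simp] lemma wsign_nil {α : Type*} (s : α → α → ℤ) {G : SimpleGraph α} {a : α} :
    wsign s (SimpleGraph.Walk.nil : G.Walk a a) = 1 := rfl

@[simp] lemma wsign_cons {α : Type*} (s : α → α → ℤ) {G : SimpleGraph α} {a c b : α}
    (h : G.Adj a c) (p : G.Walk c b) :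
    wsign s (SimpleGraph.Walk.cons h p) = s a c * wsign s p := rfl

lemma wsign_append {α : Type*} (s : α → α → ℤ) {G : SimpleGraph α} {a b c : α}
    (w₁ : G.Walk a b) (w₂ : G.Walk b c) :
    wsign s (w₁.append w₂) = wsign s w₁ * wsign s w₂ := by
  induction w₁ with
  | nil => simp
  | cons h p ih => simp [ih, mul_assoc]

lemma wsign_unit {α : Type*} {s : α → α → ℤ} (hs : ∀ i j, s i j = 1 ∨ s i j = -1)
    {G : SimpleGraph α} {a b : α} (w : G.Walk a b) :
    wsign s w = 1 ∨ wsign s w = -1 := by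
  induction w with
  | nil => left; rfl
  | @cons u v w h p ih =>
    rcases hs u v with h1 | h1 <;> rcases ih with h2 | h2 <;>
      simp [wsign_cons, h1, h2]

lemma wsign_eq_isPath {α : Type*} [DecidableEq α] {s : α → α → ℤ} {G : SimpleGraph α}
    (hac : G.IsAcyclic)
    (hsym : ∀ i j, G.Adj i j → s i j = s j i)
    (hsq : ∀ i j, s i j * s i j = 1) :
    ∀ {a b : α} (w p : G.Walk a b), p.IsPath → wsign s w = wsign s p := by
  intro a b w
  induction w with
  | nil =>
    intro p hp
    have : (⟨p, hp⟩ : G.Path _ _) = ⟨SimpleGraph.Walk.nil, SimpleGraph.Walk.IsPath.nil⟩ :=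
      hac.path_unique _ _
    have hpn : p = SimpleGraph.Walk.nil := congrArg Subtype.val this
    simp [hpn]
  | @cons a c b h w' ih =>
    intro p hp
    by_cases hc : c ∈ p.support
    · -- p = (p.takeUntil c) ++ (p.dropUntil c), and takeUntil is the single edge a-c
      have htake : p.takeUntil c hc = SimpleGraph.Walk.cons h SimpleGraph.Walk.nil := by
        have h1 : (SimpleGraph.Walk.cons h (SimpleGraph.Walk.nil : G.Walk c c)).IsPath := by
          refine SimpleGraph.Walk.IsPath.cons SimpleGraph.Walk.IsPath.nil ?_
          simp [h.ne]
        have := hac.path_unique ⟨p.takeUntil c hc, hp.takeUntil hc⟩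
          ⟨SimpleGraph.Walk.cons h SimpleGraph.Walk.nil, h1⟩
        exact congrArg Subtype.val this
      have hdrop : (p.dropUntil c hc).IsPath := hp.dropUntil hc
      have hspec := p.take_spec hc
      calc wsign s (SimpleGraph.Walk.cons h w')
          = s a c * wsign s w' := rfl
        _ = s a c * wsign s (p.dropUntil c hc) := by rw [ih _ hdrop]
        _ = wsign s ((p.takeUntil c hc).append (p.dropUntil c hc)) := by
            rw [wsign_append, htake]; simp
        _ = wsign s p := by rw [hspec]
    · -- cons h.symm p is a path from c to b
      have hq : (SimpleGraph.Walk.cons h.symm p).IsPath :=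
        SimpleGraph.Walk.IsPath.cons hp hc
      have := ih _ hq
      calc wsign s (SimpleGraph.Walk.cons h w')
          = s a c * wsign s w' := rfl
        _ = s a c * (s c a * wsign s p) := by rw [this, wsign_cons]
        _ = (s a c * s a c) * wsign s p := by rw [hsym a c h]; ring
        _ = wsign s p := by rw [hsq]; ring

/-- Any two walks between the same endpoints in an acyclic graph have the same sign. -/
lemma wsign_eq {α : Type*} [DecidableEq α] {s : α → α → ℤ} {G : SimpleGraph α}
    (hac : G.IsAcyclic)
    (hsym : ∀ i j, G.Adj i j → s i j = s j i)
    (hsq : ∀ i j, s i j * s i j = 1)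
    {a b : α} (w w' : G.Walk a b) : wsign s w = wsign s w' := by
  have h1 := wsign_eq_isPath hac hsym hsq w w'.bypass w'.bypass_isPath
  have h2 := wsign_eq_isPath hac hsym hsq w' w'.bypass w'.bypass_isPath
  rw [h1, h2]

lemma charpoly_diag_conj {n : ℕ} (B : Matrix (Fin n) (Fin n) ℤ) (ε : Fin n → ℤ)
    (hε : ∀ i, ε i * ε i = 1) :
    (Matrix.diagonal ε * B * Matrix.diagonal ε).charpoly = B.charpoly := by
  classical
  set F : Matrix (Fin n) (Fin n) (Polynomial ℤ) :=
    Matrix.diagonal (fun i => Polynomial.C (ε i)) with hF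
  have hFF : F * F = 1 := by
    rw [hF, Matrix.diagonal_mul_diagonal]
    have : (fun i => Polynomial.C (ε i) * Polynomial.C (ε i)) = fun _ => (1 : Polynomial ℤ) := by
      funext i
      rw [← Polynomial.C_mul, hε i, Polynomial.C_1]
    rw [this, Matrix.diagonal_one]
  have hmap : (Matrix.diagonal ε * B * Matrix.diagonal ε).map (Polynomial.C) =
      F * B.map (Polynomial.C) * F := by
    rw [Matrix.map_mul, Matrix.map_mul]
    congr 1
    · congr 1
      · simp [hF, Matrix.diagonal_map]
    · simp [hF, Matrix.diagonal_map]
  have hchar : Matrix.charmatrix (Matrix.diagonal ε * B * Matrix.diagonal ε) =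
      F * Matrix.charmatrix B * F := by
    rw [Matrix.charmatrix, Matrix.charmatrix, RingHom.mapMatrix_apply, RingHom.mapMatrix_apply,
      hmap, mul_sub, sub_mul]
    congr 1
    have hcomm : F * Matrix.scalar (Fin n) Polynomial.X = Matrix.scalar (Fin n) Polynomial.X * F := by
      rw [hF]
      simp [Matrix.scalar, Matrix.diagonal_mul_diagonal, mul_comm]
    rw [hcomm, mul_assoc, hFF, mul_one]
  have hdet : (F * Matrix.charmatrix B * F).det = (Matrix.charmatrix B).det := by
    rw [Matrix.det_mul, Matrix.det_mul]
    have : F.det * F.det = 1 := by rw [← Matrix.det_mul, hFF, Matrix.det_one]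
    calc F.det * (Matrix.charmatrix B).det * F.det
        = (F.det * F.det) * (Matrix.charmatrix B).det := by ring
      _ = (Matrix.charmatrix B).det := by rw [this, one_mul]
  rw [Matrix.charpoly, Matrix.charpoly, hchar, hdet]

theorem stmt6 {n : ℕ} (B B' : Matrix (Fin n) (Fin n) ℤ)
    (hB : SkewSymmetrizable B) (hB' : SkewSymmetrizable B')
    (hconn : (underlyingGraph B).Connected)
    (T : Finset (Fin n)) (x : Fin n) (hx : x ∈ T)
    (htree : ((underlyingGraph B).induce (T : Set (Fin n))).IsTree)
    (hbd : ∀ i ∈ T, i ≠ x → ∀ j ∉ T, B i j = 0)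
    (hre : ∀ i j, ((B' i j = B i j ∧ B' j i = B j i) ∨
                   (B' i j = -B i j ∧ B' j i = -B j i)) ∧
                  (¬(i ∈ T ∧ j ∈ T) → B' i j = B i j)) :
    Matrix.charpoly B' = Matrix.charpoly B := by
  classical
  obtain ⟨d, hd, hds⟩ := hB
  -- basic consequences of skew-symmetrizability
  have hzero : ∀ i j, B i j = 0 ↔ B j i = 0 := by
    intro i j
    constructor <;> intro h
    · have := hds j i
      rw [h, mul_zero, neg_zero] at this
      exact (mul_eq_zero.mp this).resolve_left (hd j).ne'
    · have := hds i j
      rw [h, mul_zero, neg_zero] at this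
      exact (mul_eq_zero.mp this).resolve_left (hd i).ne'
  have hdiag : ∀ i, B i i = 0 := by
    intro i
    have := hds i i
    have h2 : 2 * (d i * B i i) = 0 := by linarith
    have := (mul_eq_zero.mp h2).resolve_left (by norm_num)
    exact (mul_eq_zero.mp this).resolve_left (hd i).ne'
  -- the sign function
  set s : Fin n → Fin n → ℤ := fun i j => if B' i j = B i j then 1 else -1 with hsdef
  have hs_unit : ∀ i j, s i j = 1 ∨ s i j = -1 := by
    intro i j; by_cases h : B' i j = B i j <;> simp [hsdef, h]
  have hs_sq : ∀ i j, s i j * s i j = 1 := by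
    intro i j; rcases hs_unit i j with h | h <;> rw [h] <;> norm_num
  have hs_mul : ∀ i j, B' i j = s i j * B i j := by
    intro i j
    by_cases h : B' i j = B i j
    · simp [hsdef, h]
    · have h2 := ((hre i j).1).resolve_left (fun hc => h hc.1)
      have hs1 : s i j = -1 := by simp [hsdef, h]
      rw [hs1, h2.1]; ring
  have hs_symm : ∀ i j, B i j ≠ 0 → s i j = s j i := by
    intro i j hij
    have hji : B j i ≠ 0 := fun h => hij ((hzero i j).mpr h)
    rcases (hre i j).1 with ⟨h1, h2⟩ | ⟨h1, h2⟩
    · simp [hsdef, h1, h2]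
    · have e1 : ¬ (B' i j = B i j) := by rw [h1]; intro hc; apply hij; linarith
      have e2 : ¬ (B' j i = B j i) := by rw [h2]; intro hc; apply hji; linarith
      simp [hsdef, e1, e2]
  -- the induced tree
  set G := (underlyingGraph B).induce (T : Set (Fin n)) with hG
  set sS := fun (i j : (T : Set (Fin n))) => s i.1 j.1 with hsS
  have hadjB : ∀ i j : Fin n, (underlyingGraph B).Adj i j ↔ i ≠ j ∧ B i j ≠ 0 := by
    intro i j
    rw [underlyingGraph, SimpleGraph.fromRel_adj]
    constructor
    · rintro ⟨hne, h | h⟩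
      · exact ⟨hne, h⟩
      · exact ⟨hne, fun hc => h ((hzero i j).mp hc)⟩
    · rintro ⟨hne, h⟩; exact ⟨hne, Or.inl h⟩
  have hsS_symm : ∀ i j : (T : Set (Fin n)), G.Adj i j → sS i j = sS j i := by
    intro i j hij
    have : (underlyingGraph B).Adj i j := hij
    exact hs_symm _ _ ((hadjB _ _).mp this).2
  have hsS_sq : ∀ i j : (T : Set (Fin n)), sS i j * sS i j = 1 := fun i j => hs_sq _ _
  have hsS_unit : ∀ i j : (T : Set (Fin n)), sS i j = 1 ∨ sS i j = -1 := fun i j => hs_unit _ _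
  have hxm : (x : Fin n) ∈ (T : Set (Fin n)) := hx
  have hreach : ∀ v : (T : Set (Fin n)), Nonempty (G.Walk ⟨x, hxm⟩ v) :=
    fun v => htree.isConnected.preconnected ⟨x, hxm⟩ v
  -- the vertex signs
  set ε : Fin n → ℤ := fun i =>
    if h : i ∈ T then wsign sS (hreach ⟨i, h⟩).some else 1 with hεdef
  have hε_any : ∀ (i : Fin n) (h : i ∈ T) (w : G.Walk ⟨x, hxm⟩ ⟨i, h⟩), ε i = wsign sS w := by
    intro i h w
    rw [hεdef]
    simp only [dif_pos h]
    exact wsign_eq htree.IsAcyclic hsS_symm hsS_sq _ w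
  have hε_unit : ∀ i, ε i = 1 ∨ ε i = -1 := by
    intro i
    by_cases h : i ∈ T
    · rw [hε_any i h (hreach ⟨i, h⟩).some]
      exact wsign_unit hsS_unit _
    · left; simp [hεdef, h]
  have hε_sq : ∀ i, ε i * ε i = 1 := by
    intro i; rcases hε_unit i with h | h <;> rw [h] <;> norm_num
  have hε_x : ε x = 1 := by
    rw [hε_any x hx SimpleGraph.Walk.nil]; rfl
  have hε_notin : ∀ i, i ∉ T → ε i = 1 := by
    intro i h; simp [hεdef, h]
  -- the edge relation
  have hkey : ∀ (i j : Fin n) (hi : i ∈ T) (hj : j ∈ T),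
      (underlyingGraph B).Adj i j → ε j = ε i * s i j := by
    intro i j hi hj hadj
    have hadjG : G.Adj ⟨i, hi⟩ ⟨j, hj⟩ := hadj
    obtain ⟨wi⟩ := hreach ⟨i, hi⟩
    have := hε_any j hj (wi.append (SimpleGraph.Walk.cons hadjG SimpleGraph.Walk.nil))
    rw [this, wsign_append, wsign_cons, wsign_nil, mul_one, hε_any i hi wi]
  -- the matrix identity
  have hent : ∀ i j, B' i j = ε i * B i j * ε j := by
    intro i j
    by_cases hBij : B i j = 0
    · rw [hs_mul i j, hBij]; ring
    · by_cases hi : i ∈ T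
      · by_cases hj : j ∈ T
        · have hne : i ≠ j := fun h => hBij (h ▸ hdiag i)
          have hadj : (underlyingGraph B).Adj i j := (hadjB i j).mpr ⟨hne, hBij⟩
          rw [hs_mul i j, hkey i j hi hj hadj]
          have : ε i * B i j * (ε i * s i j) = (ε i * ε i) * (s i j * B i j) := by ring
          rw [this, hε_sq, one_mul]
        · -- i ∈ T, j ∉ T, B i j ≠ 0 forces i = x
          have hix : i = x := by
            by_contra hne
            exact hBij (hbd i hi hne j hj)
          have h1 : B' i j = B i j := (hre i j).2 (fun hc => hj hc.2)
          rw [h1, hix, hε_x, hε_notin j hj]; ring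
      · have h1 : B' i j = B i j := (hre i j).2 (fun hc => hi hc.1)
        rw [hε_notin i hi, h1]
        by_cases hj : j ∈ T
        · have hjx : j = x := by
            by_contra hne
            exact hBij ((hzero i j).mpr (hbd j hj hne i hi))
          rw [hjx, hε_x]; ring
        · rw [hε_notin j hj]; ring
  have hmat : B' = Matrix.diagonal ε * B * Matrix.diagonal ε := by
    ext i j
    rw [Matrix.mul_diagonal, Matrix.diagonal_mul]
    exact hent i j
  rw [hmat]
  exact charpoly_diag_conj B ε hε_sq
end

section
/- Let B = (b_{ij}) and B' = (b'_{ij}) be n×n integer skew-symmetrizable matrices such that the underlying graph of B is a tree and, for all i, j, either (b'_{ij}, b'_{ji}) = (b_{ij}, b_{ji}) or (b'_{ij}, b'_{ji}) = (−b_{ij}, −b_{ji}) (i.e., B' is a re-orientation of B). Then B and B' have the same characteristic polynomial. -/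
namespace Stmt7Aux

open SimpleGraph

variable {V : Type*} {G : SimpleGraph V}

/-- Product of edge signs along a walk. -/
def walkSign (σ : V → V → ℤ) : ∀ {u v : V}, G.Walk u v → ℤ
  | _, _, SimpleGraph.Walk.nil => 1
  | u, _, SimpleGraph.Walk.cons (v := x) _ p => σ u x * walkSign σ p

lemma walkSign_sq (σ : V → V → ℤ) (hsq : ∀ i j, σ i j * σ i j = 1) :
    ∀ {u v : V} (p : G.Walk u v), walkSign σ p * walkSign σ p = 1 := by
  intro u v p
  induction p with
  | nil => simp [walkSign]
  | cons h p ih =>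
      simp only [walkSign]
      calc σ _ _ * walkSign σ p * (σ _ _ * walkSign σ p)
          = (σ _ _ * σ _ _) * (walkSign σ p * walkSign σ p) := by ring
        _ = 1 := by rw [hsq, ih, one_mul]

lemma walkSign_append (σ : V → V → ℤ) {u v w : V} (p : G.Walk u v) (q : G.Walk v w) :
    walkSign σ (p.append q) = walkSign σ p * walkSign σ q := by
  induction p with
  | nil => simp [walkSign]
  | cons h p ih => simp [walkSign, ih, mul_assoc]

lemma walkSign_reverse (σ : V → V → ℤ) (hsymm : ∀ i j, σ i j = σ j i)
    {u v : V} (p : G.Walk u v) : walkSign σ p.reverse = walkSign σ p := by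
  induction p with
  | nil => simp [walkSign]
  | cons h p ih =>
      rw [SimpleGraph.Walk.reverse_cons, walkSign_append, ih]
      simp [walkSign, hsymm _ _, mul_comm]

variable (σ : V → V → ℤ) (hG : G.Connected)

/-- The sign of (a choice of) a path between two vertices. -/
noncomputable def pathSign [DecidableEq V] (u v : V) : ℤ :=
  walkSign σ ((Classical.choice (hG.preconnected u v : Nonempty (G.Walk u v))).toPath :
    G.Walk u v)

variable [DecidableEq V]
variable (hsymm : ∀ i j, σ i j = σ j i) (hsq : ∀ i j, σ i j * σ i j = 1)
variable (huniq : ∀ (u v : V) (p q : G.Path u v), p = q)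

include huniq in
lemma walkSign_isPath {u v : V} (p : G.Walk u v) (hp : p.IsPath) :
    walkSign σ p = pathSign σ hG u v := by
  have := huniq u v ⟨p, hp⟩
    ((Classical.choice (hG.preconnected u v : Nonempty (G.Walk u v))).toPath)
  unfold pathSign
  rw [← congrArg Subtype.val this]

include hsymm hsq huniq in
lemma pathSign_step {u x v : V} (hadj : G.Adj u x) :
    pathSign σ hG u v = σ u x * pathSign σ hG x v := by
  classical
  obtain ⟨P, hP⟩ :=
    (Classical.choice (hG.preconnected x v : Nonempty (G.Walk x v))).toPath
  have hPsign : walkSign σ P = pathSign σ hG x v := walkSign_isPath σ hG huniq P hP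
  by_cases hu : u ∈ P.support
  · -- the path from x to v passes through u
    have hdrop : (P.dropUntil u hu).IsPath := hP.dropUntil hu
    have htake : (P.takeUntil u hu).IsPath := hP.takeUntil hu
    -- the path from x to u is the single edge
    have hsingle : (SimpleGraph.Walk.cons hadj.symm SimpleGraph.Walk.nil : G.Walk x u).IsPath :=
      by simp [SimpleGraph.Walk.isPath_def, hadj.ne']
    have heq : P.takeUntil u hu = SimpleGraph.Walk.cons hadj.symm SimpleGraph.Walk.nil := by
      have := huniq x u ⟨P.takeUntil u hu, htake⟩ ⟨_, hsingle⟩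
      exact congrArg Subtype.val this
    have hsplit := P.take_spec hu
    have h1 : walkSign σ P = σ x u * walkSign σ (P.dropUntil u hu) := by
      rw [← congrArg (walkSign σ) hsplit, walkSign_append, heq]
      simp [walkSign]
    have h2 : walkSign σ (P.dropUntil u hu) = pathSign σ hG u v :=
      walkSign_isPath σ hG huniq _ hdrop
    rw [h2] at h1
    rw [hPsign] at h1
    -- h1 : pathSign x v = σ x u * pathSign u v
    calc pathSign σ hG u v = 1 * pathSign σ hG u v := (one_mul _).symm
      _ = (σ x u * σ x u) * pathSign σ hG u v := by rw [hsq]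
      _ = σ x u * (σ x u * pathSign σ hG u v) := by ring
      _ = σ u x * pathSign σ hG x v := by rw [← h1, hsymm x u]
  · -- prepend the edge to get the path from u to v
    have hcons : (SimpleGraph.Walk.cons hadj P).IsPath := hP.cons hu
    have := walkSign_isPath σ hG huniq _ hcons
    rw [← this]
    simp only [walkSign]
    rw [hPsign]

include hsymm hsq huniq in
lemma walkSign_eq_pathSign {u v : V} (p : G.Walk u v) :
    walkSign σ p = pathSign σ hG u v := by
  induction p with
  | nil =>
      exact walkSign_isPath σ hG huniq _ SimpleGraph.Walk.IsPath.nil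
  | cons h p ih =>
      simp only [walkSign]
      rw [ih, ← pathSign_step σ hG hsymm hsq huniq h]

include hsymm hsq huniq in
lemma pathSign_symm (u v : V) : pathSign σ hG u v = pathSign σ hG v u := by
  obtain ⟨q⟩ := hG.preconnected v u
  have h1 : walkSign σ q = pathSign σ hG v u :=
    walkSign_eq_pathSign σ hG hsymm hsq huniq q
  have h2 : walkSign σ q.reverse = pathSign σ hG u v :=
    walkSign_eq_pathSign σ hG hsymm hsq huniq q.reverse
  rw [← h2, walkSign_reverse σ hsymm, h1]

/-- Key existence: on a tree, a symmetric ±1 edge-sign function is switching-trivial. -/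
lemma exists_sign (hT : G.IsTree) [DecidableEq V] (σ : V → V → ℤ)
    (hsymm : ∀ i j, σ i j = σ j i) (hsq : ∀ i j, σ i j * σ i j = 1) :
    ∃ ε : V → ℤ, (∀ i, ε i * ε i = 1) ∧ ∀ i j, G.Adj i j → ε i * ε j = σ i j := by
  have hG : G.Connected := hT.isConnected
  have huniq : ∀ (u v : V) (p q : G.Path u v), p = q :=
    (SimpleGraph.isAcyclic_iff_path_unique.mp hT.IsAcyclic)
  obtain ⟨r⟩ := hG.nonempty
  refine ⟨fun v => pathSign σ hG r v, ?_, ?_⟩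
  · intro i
    dsimp only
    obtain ⟨q⟩ := hG.preconnected r i
    rw [← walkSign_eq_pathSign σ hG hsymm hsq huniq q]
    exact walkSign_sq σ hsq q
  · intro i j hadj
    dsimp only
    have h1 : pathSign σ hG r j = σ j i * pathSign σ hG i r := by
      rw [pathSign_symm σ hG hsymm hsq huniq r j]
      exact pathSign_step σ hG hsymm hsq huniq hadj.symm
    rw [h1, pathSign_symm σ hG hsymm hsq huniq i r, hsymm j i]
    have hsqε : pathSign σ hG r i * pathSign σ hG r i = 1 := by
      obtain ⟨q⟩ := hG.preconnected r i
      rw [← walkSign_eq_pathSign σ hG hsymm hsq huniq q]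
      exact walkSign_sq σ hsq q
    calc pathSign σ hG r i * (σ i j * pathSign σ hG r i)
        = σ i j * (pathSign σ hG r i * pathSign σ hG r i) := by ring
      _ = σ i j := by rw [hsqε, mul_one]

/-- Conjugation by a ±1 diagonal matrix preserves the characteristic polynomial. -/
lemma charpoly_conj_diag {n : ℕ} (B : Matrix (Fin n) (Fin n) ℤ) (ε : Fin n → ℤ)
    (hε : ∀ i, ε i * ε i = 1) :
    (Matrix.diagonal ε * B * Matrix.diagonal ε).charpoly = B.charpoly := by
  classical
  set E : Matrix (Fin n) (Fin n) (Polynomial ℤ) :=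
    Matrix.diagonal (fun i => Polynomial.C (ε i)) with hE
  have hEE : E * E = 1 := by
    rw [hE, Matrix.diagonal_mul_diagonal]
    have : (fun i => Polynomial.C (ε i) * Polynomial.C (ε i)) = fun _ => (1 : Polynomial ℤ) :=
      funext fun i => by rw [← map_mul, hε i, map_one]
    rw [this, Matrix.diagonal_one]
  have hchar : Matrix.charmatrix (Matrix.diagonal ε * B * Matrix.diagonal ε) =
      E * Matrix.charmatrix B * E := by
    apply Matrix.ext; intro i j
    have hL : (Matrix.diagonal ε * B * Matrix.diagonal ε) i j = ε i * B i j * ε j := by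
      rw [Matrix.mul_diagonal, Matrix.diagonal_mul]
    have hR : (E * Matrix.charmatrix B * E) i j =
        Polynomial.C (ε i) * Matrix.charmatrix B i j * Polynomial.C (ε j) := by
      rw [Matrix.mul_diagonal, Matrix.diagonal_mul]
    rw [hR]
    by_cases h : i = j
    · subst h
      rw [Matrix.charmatrix_apply_eq, Matrix.charmatrix_apply_eq, hL]
      have h1 : ε i * B i i * ε i = B i i := by
        rw [mul_right_comm, hε, one_mul]
      rw [h1]
      have h2 : Polynomial.C (ε i) * Polynomial.C (ε i) = 1 := by
        rw [← map_mul, hε, map_one]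
      calc (Polynomial.X : Polynomial ℤ) - Polynomial.C (B i i)
          = Polynomial.C (ε i) * Polynomial.C (ε i) *
              ((Polynomial.X : Polynomial ℤ) - Polynomial.C (B i i)) := by rw [h2, one_mul]
        _ = Polynomial.C (ε i) * ((Polynomial.X : Polynomial ℤ) - Polynomial.C (B i i)) *
              Polynomial.C (ε i) := by ring
    · rw [Matrix.charmatrix_apply_ne _ _ _ h, Matrix.charmatrix_apply_ne _ _ _ h, hL]
      rw [map_mul, map_mul]
      ring
  rw [Matrix.charpoly, Matrix.charpoly, hchar, Matrix.det_mul, Matrix.det_mul]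
  have hdet : E.det * E.det = 1 := by rw [← Matrix.det_mul, hEE, Matrix.det_one]
  calc E.det * (Matrix.charmatrix B).det * E.det
      = (Matrix.charmatrix B).det * (E.det * E.det) := by ring
    _ = (Matrix.charmatrix B).det := by rw [hdet, mul_one]

end Stmt7Aux

theorem stmt7 {n : ℕ} (B B' : Matrix (Fin n) (Fin n) ℤ)
    (hB : SkewSymmetrizable B) (hB' : SkewSymmetrizable B')
    (htree : (underlyingGraph B).IsTree)
    (hre : ∀ i j, (B' i j = B i j ∧ B' j i = B j i) ∨
                  (B' i j = -B i j ∧ B' j i = -B j i)) :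
    Matrix.charpoly B' = Matrix.charpoly B := by
  classical
  obtain ⟨d, hd, hdskew⟩ := hB
  -- diagonal entries of B vanish
  have hBdiag : ∀ i, B i i = 0 := by
    intro i
    have h := hdskew i i
    have h0 : d i * B i i = 0 := by linarith
    rcases mul_eq_zero.mp h0 with h | h
    · exact absurd h (ne_of_gt (hd i))
    · exact h
  -- vanishing entries come in pairs
  have hzero : ∀ i j, B i j = 0 → B j i = 0 := by
    intro i j hij
    have h := hdskew i j
    rw [hij, mul_zero] at h
    have h0 : d j * B j i = 0 := by linarith
    rcases mul_eq_zero.mp h0 with h | h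
    · exact absurd h (ne_of_gt (hd j))
    · exact h
  -- the sign of each entry pair
  set σ : Fin n → Fin n → ℤ :=
    fun i j => if B' i j = B i j ∧ B' j i = B j i then 1 else -1 with hσ
  have hsymm : ∀ i j, σ i j = σ j i := by
    intro i j
    simp only [hσ]
    by_cases h : B' i j = B i j ∧ B' j i = B j i
    · rw [if_pos h, if_pos ⟨h.2, h.1⟩]
    · rw [if_neg h, if_neg (fun hc => h ⟨hc.2, hc.1⟩)]
  have hsq : ∀ i j, σ i j * σ i j = 1 := by
    intro i j
    simp only [hσ]
    split <;> norm_num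
  have hσB : ∀ i j, B' i j = σ i j * B i j := by
    intro i j
    simp only [hσ]
    by_cases h : B' i j = B i j ∧ B' j i = B j i
    · rw [if_pos h, one_mul]; exact h.1
    · rw [if_neg h]
      rcases hre i j with hc | hc
      · exact absurd hc h
      · rw [hc.1]; ring
  obtain ⟨ε, hεsq, hεadj⟩ := Stmt7Aux.exists_sign htree σ hsymm hsq
  -- B' is the conjugate of B by diag ε
  have key : ∀ i j, B' i j = ε i * B i j * ε j := by
    intro i j
    by_cases hij : i = j
    · subst hij
      rw [hσB, hBdiag, mul_zero, mul_zero, zero_mul]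
    by_cases hadj : (underlyingGraph B).Adj i j
    · rw [hσB, ← hεadj i j hadj]; ring
    · have hB0 : B i j = 0 := by
        by_contra hne
        exact hadj ((SimpleGraph.fromRel_adj _ i j).mpr ⟨hij, Or.inl hne⟩)
      rw [hσB, hB0, mul_zero, mul_zero, zero_mul]
  have hBB' : B' = Matrix.diagonal ε * B * Matrix.diagonal ε := by
    ext i j
    rw [Matrix.mul_diagonal, Matrix.diagonal_mul]
    exact key i j
  rw [hBB']
  exact Stmt7Aux.charpoly_conj_diag B ε hεsq
end

section
/- Let B be an n×n integer skew-symmetrizable matrix with n ≥ 2, let k ∈ {1,…,n}, and let B' be the (n−1)×(n−1) principal submatrix of B obtained by deleting row k and column k. Write the complex eigenvalues of B (with multiplicity) as i·λ_1, i·λ_2, …, i·λ_n with λ_1 ≥ λ_2 ≥ … ≥ λ_n real, and those of B' as i·γ_2, …, i·γ_n with γ_2 ≥ … ≥ γ_n real. Then λ_1 ≥ γ_2 ≥ λ_2 ≥ γ_3 ≥ λ_3 ≥ … ≥ γ_n ≥ λ_n. -/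
/-!
With `D = diag d`, the real matrix `S = D^{1/2} B D^{-1/2}` is similar to `B` and skew-symmetric,
so `H = -i S` is Hermitian with eigenvalues `λ_j`; its principal submatrix at `k` is the matrix
obtained in the same way from `B'`, with eigenvalues `γ_j`. The claim is therefore Cauchy
interlacing for `H`, which follows from one half of the min-max principle: if the Rayleigh
quotient of `H` is at least `t` on a subspace of dimension `j + 1`, then `t ≤ λ_j`, because that
subspace meets the span of the eigenvectors for `λ_j, …, λ_n`. Applied to the span of the top
`j + 1` eigenvectors of `H'`, embedded by `x_k = 0`, this gives `γ_j ≤ λ_j`; applied to the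
hyperplane `x_k = 0` intersected with the span of the top `j + 2` eigenvectors of `H`, it gives
`λ_{j+1} ≤ γ_j`.
-/

open Module Polynomial
open scoped InnerProductSpace

namespace OrthonormalBasis

variable {ι 𝕜 E : Type*} [Fintype ι] [RCLike 𝕜] [NormedAddCommGroup E] [InnerProductSpace 𝕜 E]
  (b : OrthonormalBasis ι 𝕜 E)

theorem norm_sq_eq_sum_repr (x : E) : ‖x‖ ^ 2 = ∑ i, ‖b.repr x i‖ ^ 2 := by
  rw [← b.repr.norm_map, EuclideanSpace.norm_sq_eq]

theorem repr_eq_zero_of_mem_span_image {S : Set ι} {x : E} (hx : x ∈ Submodule.span 𝕜 (b '' S))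
    {i : ι} (hi : i ∉ S) : b.repr x i = 0 := by
  rw [← b.coe_toBasis, Basis.mem_span_image] at hx
  rw [← b.coe_toBasis_repr_apply]
  exact Finsupp.notMem_support_iff.mp fun h => hi (hx h)

theorem finrank_span_image (S : Finset ι) :
    finrank 𝕜 (Submodule.span 𝕜 (b '' S)) = S.card := by
  have hS : LinearIndependent 𝕜 fun i : (S : Set ι) => b i :=
    b.orthonormal.linearIndependent.comp _ Subtype.val_injective
  rw [Set.image_eq_range, finrank_span_eq_card hS]
  simp

end OrthonormalBasis

namespace LinearMap.IsSymmetric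

variable {𝕜 E : Type*} [RCLike 𝕜] [NormedAddCommGroup E] [InnerProductSpace 𝕜 E]
  [FiniteDimensional 𝕜 E] {T : E →ₗ[𝕜] E} (hT : T.IsSymmetric)

section MinMax

variable {n : ℕ} (hn : finrank 𝕜 E = n)

theorem eigenvalues_eq_of_charpoly_eq {μ : Fin n → ℝ} (hμ : Antitone μ)
    (h : T.charpoly = ∏ i, (X - C (μ i : 𝕜))) : hT.eigenvalues hn = μ := by
  rw [← List.ofFn_inj, ← hT.sort_roots_charpoly_eq_eigenvalues hn, h,
    roots_prod _ _ (Finset.prod_ne_zero_iff.mpr fun i _ => X_sub_C_ne_zero _)]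
  simp only [roots_X_sub_C, Multiset.bind_singleton, Fin.univ_val_map, Multiset.map_coe,
    List.map_ofFn, Function.comp_def, RCLike.ofReal_re, Multiset.coe_sort]
  apply List.mergeSort_of_pairwise
  simpa [List.pairwise_ofFn] using fun _ _ hij => hμ hij.le

theorem re_inner_apply_self_eq_sum (x : E) :
    RCLike.re ⟪x, T x⟫_𝕜 =
      ∑ i, hT.eigenvalues hn i * ‖(hT.eigenvectorBasis hn).repr x i‖ ^ 2 := by
  rw [← (hT.eigenvectorBasis hn).repr.inner_map_map, PiLp.inner_apply, map_sum]
  refine Finset.sum_congr rfl fun i _ => ?_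
  rw [eigenvectorBasis_apply_self_apply, ← smul_eq_mul, inner_smul_right,
    inner_self_eq_norm_sq_to_K]
  norm_cast

theorem le_re_inner_apply_self_of_mem_span {S : Set (Fin n)} {t : ℝ}
    (hS : ∀ i ∈ S, t ≤ hT.eigenvalues hn i) {x : E}
    (hx : x ∈ Submodule.span 𝕜 (hT.eigenvectorBasis hn '' S)) :
    t * ‖x‖ ^ 2 ≤ RCLike.re ⟪x, T x⟫_𝕜 := by
  rw [hT.re_inner_apply_self_eq_sum hn, (hT.eigenvectorBasis hn).norm_sq_eq_sum_repr,
    Finset.mul_sum]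
  refine Finset.sum_le_sum fun i _ => ?_
  by_cases hi : i ∈ S
  · exact mul_le_mul_of_nonneg_right (hS i hi) (sq_nonneg _)
  · simp [(hT.eigenvectorBasis hn).repr_eq_zero_of_mem_span_image hx hi]

theorem re_inner_apply_self_le_of_mem_span {S : Set (Fin n)} {s : ℝ}
    (hS : ∀ i ∈ S, hT.eigenvalues hn i ≤ s) {x : E}
    (hx : x ∈ Submodule.span 𝕜 (hT.eigenvectorBasis hn '' S)) :
    RCLike.re ⟪x, T x⟫_𝕜 ≤ s * ‖x‖ ^ 2 := by
  rw [hT.re_inner_apply_self_eq_sum hn, (hT.eigenvectorBasis hn).norm_sq_eq_sum_repr,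
    Finset.mul_sum]
  refine Finset.sum_le_sum fun i _ => ?_
  by_cases hi : i ∈ S
  · exact mul_le_mul_of_nonneg_right (hS i hi) (sq_nonneg _)
  · simp [(hT.eigenvectorBasis hn).repr_eq_zero_of_mem_span_image hx hi]

theorem le_eigenvalues_of_le_re_inner {U : Submodule 𝕜 E} {j : Fin n}
    (hU : j + 1 ≤ finrank 𝕜 U) {t : ℝ} (ht : ∀ x ∈ U, t * ‖x‖ ^ 2 ≤ RCLike.re ⟪x, T x⟫_𝕜) :
    t ≤ hT.eigenvalues hn j := by
  set V := Submodule.span 𝕜 (hT.eigenvectorBasis hn '' ↑(Finset.Ici j))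
  have hV : finrank 𝕜 V = n - j := by
    rw [OrthonormalBasis.finrank_span_image, Fin.card_Ici]
  obtain ⟨x, hxU, hxV, hx⟩ : ∃ x ∈ U, x ∈ V ∧ x ≠ 0 := by
    by_contra! h
    have := Submodule.finrank_add_finrank_le_of_disjoint
      (Submodule.disjoint_def.mpr fun x hxU hxV => h x hxU hxV)
    omega
  have hle := hT.re_inner_apply_self_le_of_mem_span hn
    (fun i hi => hT.eigenvalues_antitone hn (Finset.mem_Ici.mp hi)) hxV
  exact le_of_mul_le_mul_right ((ht x hxU).trans hle) (by positivity)

end MinMax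

section Compression

variable {E' : Type*} [NormedAddCommGroup E'] [InnerProductSpace 𝕜 E'] [FiniteDimensional 𝕜 E']
  {T' : E' →ₗ[𝕜] E'} (hT' : T'.IsSymmetric) {m : ℕ} (hn : finrank 𝕜 E = m + 1)
  (hm : finrank 𝕜 E' = m) (J : E' →ₗᵢ[𝕜] E) (hJ : ∀ y, ⟪J y, T (J y)⟫_𝕜 = ⟪y, T' y⟫_𝕜)
include hT' hJ

theorem eigenvalues_compression_le (j : Fin m) :
    hT'.eigenvalues hm j ≤ hT.eigenvalues hn j.castSucc := by
  set U' := Submodule.span 𝕜 (hT'.eigenvectorBasis hm '' ↑(Finset.Iic j))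
  refine hT.le_eigenvalues_of_le_re_inner hn (U := U'.map J.toLinearMap) ?_ ?_
  · rw [← (Submodule.equivMapOfInjective _ J.injective U').finrank_eq,
      OrthonormalBasis.finrank_span_image, Fin.card_Iic, Fin.val_castSucc]
  · rintro _ ⟨y, hy, rfl⟩
    rw [LinearIsometry.coe_toLinearMap, J.norm_map, hJ]
    exact hT'.le_re_inner_apply_self_of_mem_span hm
      (fun i hi => hT'.eigenvalues_antitone hm (Finset.mem_Iic.mp hi)) hy

theorem eigenvalues_succ_le_compression (j : Fin m) :
    hT.eigenvalues hn j.succ ≤ hT'.eigenvalues hm j := by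
  set W := Submodule.span 𝕜 (hT.eigenvectorBasis hn '' ↑(Finset.Iic j.succ))
  refine hT'.le_eigenvalues_of_le_re_inner hm (U := W.comap J.toLinearMap) ?_ ?_
  · have hW : finrank 𝕜 W = j + 2 := by
      rw [OrthonormalBasis.finrank_span_image, Fin.card_Iic, Fin.val_succ]
    have hrange : finrank 𝕜 (LinearMap.range J.toLinearMap) = m :=
      (LinearMap.finrank_range_of_inj J.injective).trans hm
    have hsup_inf := Submodule.finrank_sup_add_finrank_inf_eq (LinearMap.range J.toLinearMap) W
    have hsup := Submodule.finrank_le (LinearMap.range J.toLinearMap ⊔ W)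
    have hmap := Submodule.finrank_map_le J.toLinearMap (W.comap J.toLinearMap)
    rw [Submodule.map_comap_eq] at hmap
    omega
  · intro y hy
    rw [← J.norm_map, ← hJ]
    exact hT.le_re_inner_apply_self_of_mem_span hn
      (fun i hi => hT.eigenvalues_antitone hn (Finset.mem_Iic.mp hi)) hy

end Compression

end LinearMap.IsSymmetric

namespace EuclideanSpace

variable {𝕜 : Type*} [RCLike 𝕜] {m : ℕ} (k : Fin (m + 1))

noncomputable def insertNthZero :
    EuclideanSpace 𝕜 (Fin m) →ₗᵢ[𝕜] EuclideanSpace 𝕜 (Fin (m + 1)) where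
  toFun y := WithLp.toLp 2 (Fin.insertNth k 0 y.ofLp)
  map_add' y z := by
    ext i
    induction i using Fin.succAboveCases k <;> simp
  map_smul' c y := by
    ext i
    induction i using Fin.succAboveCases k <;> simp
  norm_map' y := by
    simp [EuclideanSpace.norm_eq, Fin.sum_univ_succAbove _ k]

theorem inner_insertNthZero_toEuclideanLin (A : Matrix (Fin (m + 1)) (Fin (m + 1)) 𝕜)
    (y z : EuclideanSpace 𝕜 (Fin m)) :
    ⟪insertNthZero k y, Matrix.toEuclideanLin A (insertNthZero k z)⟫_𝕜 =
      ⟪y, Matrix.toEuclideanLin (A.submatrix k.succAbove k.succAbove) z⟫_𝕜 := by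
  simp [insertNthZero, PiLp.inner_apply, Fin.sum_univ_succAbove _ k, Matrix.mulVec, dotProduct]

end EuclideanSpace

namespace Matrix

theorem isHermitian_neg_I_smul_map_ofReal {n : Type*} {S : Matrix n n ℝ} (hS : Sᵀ = -S) :
    ((-Complex.I) • S.map Complex.ofReal).IsHermitian := by
  ext i j
  have h := congrFun (congrFun hS i) j
  simp only [transpose_apply, neg_apply] at h
  simp [conjTranspose_apply, h]

variable {n : Type*} [Fintype n] [DecidableEq n]

theorem charpoly_toEuclideanLin {𝕜 : Type*} [RCLike 𝕜] (A : Matrix n n 𝕜) :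
    (toEuclideanLin A).charpoly = A.charpoly := by
  rw [toEuclideanLin, toLpLin_eq_toLin, charpoly_toLin]

theorem charpoly_smul_of_eq_prod {K : Type*} [Field K] [Infinite K] {M : Matrix n n K}
    {μ : n → K} (h : M.charpoly = ∏ i, (X - C (μ i))) (c : K) :
    (c • M).charpoly = ∏ i, (X - C (c * μ i)) := by
  rcases eq_or_ne c 0 with rfl | hc
  · simp [charpoly_zero]
  refine Polynomial.funext fun z => ?_
  have hscale : scalar n z - c • M = c • (scalar n (z / c) - M) := by
    rw [smul_sub, scalar_apply, scalar_apply, ← diagonal_smul, Pi.smul_def, smul_eq_mul,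
      mul_div_cancel₀ _ hc]
  rw [eval_charpoly, hscale, det_smul, ← eval_charpoly, h, eval_prod, eval_prod,
    ← Finset.card_univ, ← Finset.prod_const, ← Finset.prod_mul_distrib]
  refine Finset.prod_congr rfl fun i _ => ?_
  simp only [eval_sub, eval_X, eval_C]
  field_simp

theorem IsHermitian.cauchy_interlacing {𝕜 : Type*} [RCLike 𝕜] {m : ℕ}
    {A : Matrix (Fin (m + 1)) (Fin (m + 1)) 𝕜} (hA : A.IsHermitian) (k : Fin (m + 1))
    {lam : Fin (m + 1) → ℝ} (hlam : Antitone lam) {gam : Fin m → ℝ} (hgam : Antitone gam)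
    (hA_charpoly : A.charpoly = ∏ j, (X - C (lam j : 𝕜)))
    (hA'_charpoly : (A.submatrix k.succAbove k.succAbove).charpoly = ∏ j, (X - C (gam j : 𝕜)))
    (j : Fin m) : gam j ≤ lam j.castSucc ∧ lam j.succ ≤ gam j := by
  have hT := isSymmetric_toEuclideanLin_iff.mpr hA
  have hT' := isSymmetric_toEuclideanLin_iff.mpr (hA.submatrix k.succAbove)
  have hn : finrank 𝕜 (EuclideanSpace 𝕜 (Fin (m + 1))) = m + 1 := finrank_euclideanSpace_fin
  have hm : finrank 𝕜 (EuclideanSpace 𝕜 (Fin m)) = m := finrank_euclideanSpace_fin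
  rw [← charpoly_toEuclideanLin] at hA_charpoly hA'_charpoly
  rw [← hT.eigenvalues_eq_of_charpoly_eq hn hlam hA_charpoly,
    ← hT'.eigenvalues_eq_of_charpoly_eq hm hgam hA'_charpoly]
  have hJ y := EuclideanSpace.inner_insertNthZero_toEuclideanLin k A y y
  exact ⟨hT.eigenvalues_compression_le hT' hn hm _ hJ j,
    hT.eigenvalues_succ_le_compression hT' hn hm _ hJ j⟩

noncomputable def skewSymmetrize (d : n → ℝ) (A : Matrix n n ℝ) : Matrix n n ℝ :=
  diagonal (fun i => √(d i)) * A * diagonal (fun i => (√(d i))⁻¹)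

theorem skewSymmetrize_apply (d : n → ℝ) (A : Matrix n n ℝ) (i j : n) :
    skewSymmetrize d A i j = √(d i) * A i j / √(d j) := by
  simp [skewSymmetrize, diagonal_mul, mul_diagonal, div_eq_mul_inv]

theorem submatrix_skewSymmetrize {m : Type*} [Fintype m] [DecidableEq m] (d : n → ℝ)
    (A : Matrix n n ℝ) (e : m → n) :
    (skewSymmetrize d A).submatrix e e = skewSymmetrize (d ∘ e) (A.submatrix e e) := by
  ext i j
  simp [skewSymmetrize_apply]

theorem transpose_skewSymmetrize {d : n → ℝ} (hd : ∀ i, 0 < d i) {A : Matrix n n ℝ}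
    (hA : ∀ i j, d i * A i j = -(d j * A j i)) :
    (skewSymmetrize d A)ᵀ = -skewSymmetrize d A := by
  ext i j
  have hi := Real.sqrt_pos.mpr (hd i)
  have hj := Real.sqrt_pos.mpr (hd j)
  rw [transpose_apply, neg_apply, skewSymmetrize_apply, skewSymmetrize_apply]
  field_simp
  rw [Real.sq_sqrt (hd i).le, Real.sq_sqrt (hd j).le]
  exact hA j i

theorem charpoly_skewSymmetrize {d : n → ℝ} (hd : ∀ i, 0 < d i) (A : Matrix n n ℝ) :
    (skewSymmetrize d A).charpoly = A.charpoly := by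
  have hD : (diagonal fun i => (√(d i))⁻¹) * diagonal (fun i => √(d i)) = 1 := by
    simp [fun i => (Real.sqrt_pos.mpr (hd i)).ne']
  rw [skewSymmetrize, charpoly_mul_comm, ← mul_assoc, hD, one_mul]

theorem charpoly_neg_I_smul_skewSymmetrize {d : n → ℝ} (hd : ∀ i, 0 < d i) {A : Matrix n n ℝ}
    {μ : n → ℝ} (hA : (A.map Complex.ofReal).charpoly = ∏ i, (X - C (μ i * Complex.I))) :
    ((-Complex.I) • (skewSymmetrize d A).map Complex.ofReal).charpoly =
      ∏ i, (X - C (μ i : ℂ)) := by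
  have hS : ((skewSymmetrize d A).map Complex.ofRealHom).charpoly =
      ∏ i, (X - C (μ i * Complex.I)) := by
    rw [charpoly_map, charpoly_skewSymmetrize hd, ← charpoly_map, ← hA]
    rfl
  refine (charpoly_smul_of_eq_prod hS (-Complex.I)).trans (Finset.prod_congr rfl fun i _ => ?_)
  rw [show -Complex.I * (μ i * Complex.I) = μ i by
    linear_combination -(μ i : ℂ) * Complex.I_mul_I]

theorem cauchy_interlacing_of_skewSymmetrizable {m : ℕ} {A : Matrix (Fin (m + 1)) (Fin (m + 1)) ℝ}
    {d : Fin (m + 1) → ℝ} (hd : ∀ i, 0 < d i) (hA : ∀ i j, d i * A i j = -(d j * A j i))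
    (k : Fin (m + 1)) {lam : Fin (m + 1) → ℝ} (hlam : Antitone lam) {gam : Fin m → ℝ}
    (hgam : Antitone gam)
    (hA_charpoly : (A.map Complex.ofReal).charpoly = ∏ j, (X - C (lam j * Complex.I)))
    (hA'_charpoly : ((A.submatrix k.succAbove k.succAbove).map Complex.ofReal).charpoly =
      ∏ j, (X - C (gam j * Complex.I)))
    (j : Fin m) : gam j ≤ lam j.castSucc ∧ lam j.succ ≤ gam j := by
  have hH := isHermitian_neg_I_smul_map_ofReal (transpose_skewSymmetrize hd hA)
  refine hH.cauchy_interlacing k hlam hgam (charpoly_neg_I_smul_skewSymmetrize hd hA_charpoly)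
    ?_ j
  rw [show ((-Complex.I) • (skewSymmetrize d A).map Complex.ofReal).submatrix k.succAbove
      k.succAbove = (-Complex.I) • ((skewSymmetrize d A).submatrix k.succAbove
        k.succAbove).map Complex.ofReal from rfl, submatrix_skewSymmetrize]
  exact charpoly_neg_I_smul_skewSymmetrize (fun i => hd _) hA'_charpoly

end Matrix

open Polynomial in
theorem stmt10_general {m : ℕ} (B : Matrix (Fin (m + 1)) (Fin (m + 1)) ℤ)
    (hB : SkewSymmetrizable B) (k : Fin (m + 1))
    (lam : Fin (m + 1) → ℝ) (hlam : Antitone lam)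
    (gam : Fin m → ℝ) (hgam : Antitone gam)
    (hBspec : Matrix.charpoly (B.map (Int.cast : ℤ → ℂ)) =
      ∏ j : Fin (m + 1), (X - C ((lam j : ℂ) * Complex.I)))
    (hB'spec : Matrix.charpoly ((B.submatrix k.succAbove k.succAbove).map
        (Int.cast : ℤ → ℂ)) =
      ∏ j : Fin m, (X - C ((gam j : ℂ) * Complex.I))) :
    ∀ j : Fin m, gam j ≤ lam j.castSucc ∧ lam j.succ ≤ gam j := by
  obtain ⟨d, hd, hdB⟩ := hB
  set A : Matrix (Fin (m + 1)) (Fin (m + 1)) ℝ := B.map (Int.cast : ℤ → ℝ)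
  have hBA : B.map (Int.cast : ℤ → ℂ) = A.map Complex.ofReal := by
    ext
    simp [A]
  rw [hBA] at hBspec
  rw [← Matrix.submatrix_map, hBA, Matrix.submatrix_map] at hB'spec
  refine Matrix.cauchy_interlacing_of_skewSymmetrizable (d := fun i => (d i : ℝ))
    (fun i => Int.cast_pos.mpr (hd i)) (fun i j => ?_) k hlam hgam hBspec hB'spec
  simpa [A] using congr(($(hdB i j) : ℝ))

open Polynomial in
theorem stmt10 {m : ℕ} (hm : 1 ≤ m) (B : Matrix (Fin (m + 1)) (Fin (m + 1)) ℤ)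
    (hB : SkewSymmetrizable B) (k : Fin (m + 1))
    (lam : Fin (m + 1) → ℝ) (hlam : Antitone lam)
    (gam : Fin m → ℝ) (hgam : Antitone gam)
    (hBspec : Matrix.charpoly (B.map (Int.cast : ℤ → ℂ)) =
      ∏ j : Fin (m + 1), (X - C ((lam j : ℂ) * Complex.I)))
    (hB'spec : Matrix.charpoly ((B.submatrix k.succAbove k.succAbove).map
        (Int.cast : ℤ → ℂ)) =
      ∏ j : Fin m, (X - C ((gam j : ℂ) * Complex.I))) :
    ∀ j : Fin m, gam j ≤ lam j.castSucc ∧ lam j.succ ≤ gam j :=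
  stmt10_general B hB k lam hlam gam hgam hBspec hB'spec
end

section
/- Let B = (b_{ij}) be an n×n integer skew-symmetric matrix and k ∈ {1,…,n}. Let W be the n×n integer matrix with W_{ii} = 1 for i ≠ k, W_{kk} = −1, W_{ik} = [b_{ik}]_+ = max(b_{ik}, 0) for i ≠ k, and all other entries 0. Then det(W) = −1 and μ_k(B) = W·B·Wᵀ. -/
def mutate {n : ℕ} (B : Matrix (Fin n) (Fin n) ℤ) (k : Fin n) :
    Matrix (Fin n) (Fin n) ℤ :=
  Matrix.of fun i j =>
    if i = k ∨ j = k then -B i j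
    else B i j + Int.sign (B i k) * max (B i k * B k j) 0

private lemma sum_two {N : Type*} [Fintype N] [DecidableEq N] (f : N → ℤ) (a b : N)
    (hab : a ≠ b) (h : ∀ c, c ≠ a → c ≠ b → f c = 0) : ∑ c, f c = f a + f b := by
  rw [← Finset.sum_pair hab]
  exact (Finset.sum_subset (Finset.subset_univ _)
    (fun c _ hc => by
      simp only [Finset.mem_insert, Finset.mem_singleton] at hc
      exact h c (fun h' => hc (Or.inl h')) (fun h' => hc (Or.inr h')))).symm

private lemma sign_max_aux (b c : ℤ) :
    Int.sign b * max (b * c) 0 = b * max (-c) 0 + max b 0 * c := by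
  rcases lt_trichotomy b 0 with hb | hb | hb
  · rcases lt_trichotomy c 0 with hc | hc | hc
    · rw [Int.sign_eq_neg_one_of_neg hb, max_eq_left (mul_pos_of_neg_of_neg hb hc).le,
        max_eq_left (by linarith : (0:ℤ) ≤ -c), max_eq_right hb.le]; ring
    · subst hc; simp
    · rw [Int.sign_eq_neg_one_of_neg hb, max_eq_right (mul_neg_of_neg_of_pos hb hc).le,
        max_eq_right (by linarith : -c ≤ 0), max_eq_right hb.le]; ring
  · subst hb; simp
  · rcases lt_trichotomy c 0 with hc | hc | hc
    · rw [Int.sign_eq_one_of_pos hb, max_eq_right (mul_neg_of_pos_of_neg hb hc).le,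
        max_eq_left (by linarith : (0:ℤ) ≤ -c), max_eq_left hb.le]; ring
    · subst hc; simp
    · rw [Int.sign_eq_one_of_pos hb, max_eq_left (mul_pos hb hc).le,
        max_eq_right (by linarith : -c ≤ 0), max_eq_left hb.le]; ring

theorem stmt13 {n : ℕ} (B : Matrix (Fin n) (Fin n) ℤ)
    (hskew : ∀ i j, B j i = -B i j) (k : Fin n)
    (W : Matrix (Fin n) (Fin n) ℤ)
    (hW : W = Matrix.of fun i j =>
      if i = j then (if i = k then (-1 : ℤ) else 1)
      else if j = k then max (B i k) 0 else 0) :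
    W.det = -1 ∧ mutate B k = W * B * W.transpose := by
  have hkk : B k k = 0 := by have := hskew k k; linarith
  have hWe : ∀ i j, W i j =
      if i = j then (if i = k then (-1 : ℤ) else 1)
      else if j = k then max (B i k) 0 else 0 := by
    intro i j; rw [hW]; rfl
  constructor
  · have hWc : W = (1 : Matrix (Fin n) (Fin n) ℤ).updateCol k
        (fun i => if i = k then -1 else max (B i k) 0) := by
      ext i j
      rw [hWe, Matrix.updateCol_apply]
      by_cases hj : j = k
      · by_cases hi : i = k
        · simp [hi, hj]
        · simp [hj, hi, fun h : i = j => hi (h.trans hj)]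
      · by_cases hi : i = j
        · subst hi; simp [hj, Matrix.one_apply]
        · simp [hi, hj, Matrix.one_apply, hi]
    rw [hWc, ← Matrix.cramer_apply, Matrix.cramer_one]
    simp
  · have hWB : ∀ i b, (W * B) i b =
        if i = k then -B k b else B i b + max (B i k) 0 * B k b := by
      intro i b
      rw [Matrix.mul_apply]
      by_cases hi : i = k
      · rw [if_pos hi,
          Fintype.sum_eq_single k (fun c hc => by
            rw [hWe, if_neg (fun h : i = c => hc (h ▸ hi)), if_neg hc, zero_mul])]
        rw [hWe, if_pos hi, if_pos hi]; ring
      · rw [if_neg hi,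
          sum_two _ i k hi (fun c hci hck => by
            rw [hWe, if_neg (fun h : i = c => hci h.symm), if_neg hck, zero_mul])]
        rw [hWe, hWe, if_pos rfl, if_neg hi, if_neg hi, if_pos rfl]
        ring
    ext i j
    rw [Matrix.mul_apply]
    show mutate B k i j = _
    by_cases hj : j = k
    · rw [Fintype.sum_eq_single k (fun c hc => by
        rw [Matrix.transpose_apply, hWe, if_neg (fun h : j = c => hc (h ▸ hj)),
          if_neg hc, mul_zero])]
      rw [Matrix.transpose_apply, hWe, if_pos hj, if_pos (hj ▸ hj), hWB]
      show (if i = k ∨ j = k then -B i j else _) = _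
      rw [if_pos (Or.inr hj)]
      by_cases hi : i = k
      · rw [if_pos hi, hi, hj, hkk]; ring
      · rw [if_neg hi, hj, hkk]; ring
    · rw [sum_two _ j k hj (fun c hcj hck => by
        rw [Matrix.transpose_apply, hWe, if_neg (fun h : j = c => hcj h.symm),
          if_neg hck, mul_zero])]
      rw [Matrix.transpose_apply, Matrix.transpose_apply, hWe, hWe,
        if_pos rfl, if_neg hj, if_neg hj, if_pos rfl]
      show (if i = k ∨ j = k then -B i j else _) = _
      by_cases hi : i = k
      · rw [if_pos (Or.inl hi), hWB, hWB, if_pos hi, if_pos hi, hi, hkk]; ring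
      · rw [if_neg (by tauto), hWB, hWB, if_neg hi, if_neg hi, hkk, hskew k j]
        have := sign_max_aux (B i k) (B k j)
        linarith
end

section
/- Let B = (b_{ij}) be an n×n integer skew-symmetric matrix such that Q(B) has no 3-cycles, i.e., there is no triple of indices i, j, l with b_{ij} > 0, b_{jl} > 0 and b_{li} > 0, and fix k ∈ {1,…,n}. Then μ_k(B) and B have the same characteristic polynomial if and only if k is a sink or a source of Q(B), i.e., b_{ik} ≥ 0 for all i, or b_{ik} ≤ 0 for all i. -/
/-!
Conjugating by the diagonal sign matrix that flips the `k`-th basis vector negates exactly the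
entries in row and column `k`. At a sink or a source every product `b_ik b_kj` is `≤ 0`, so
mutation is such a conjugation and preserves the characteristic polynomial.

Conversely, the coefficient of `X^(n-2)` in the characteristic polynomial of a skew-symmetric
matrix is `∑_{i<j} b_ij²`. Without 3-cycles the correction term that mutation adds to `b_ij` has
the sign of `b_ij`, so no square decreases; if `b_ik > 0 > b_jk`, the square of the `(i, j)`
entry strictly increases, hence the two characteristic polynomials differ.
-/

open Finset Polynomial Equiv

lemma Int.sign_mul_max_mul_comm (x y : ℤ) :
    x.sign * max (x * y) 0 = y.sign * max (x * y) 0 := by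
  rcases le_or_gt (x * y) 0 with h | h
  · simp [max_eq_right h]
  · rcases pos_and_pos_or_neg_and_neg_of_mul_pos h with ⟨hx, hy⟩ | ⟨hx, hy⟩
    · simp [Int.sign_eq_one_of_pos hx, Int.sign_eq_one_of_pos hy]
    · simp [Int.sign_eq_neg_one_of_neg hx, Int.sign_eq_neg_one_of_neg hy]

lemma diag_eq_zero_of_skew {ι : Type*} {M : Matrix ι ι ℤ} (hskew : ∀ i j, M j i = -M i j)
    (i : ι) : M i i = 0 := by
  have := hskew i i
  omega

namespace Matrix

lemma charpoly_coeff_card_sub_two {R ι : Type*} [CommRing R] [Fintype ι] [DecidableEq ι]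
    (M : Matrix ι ι R) (hM : ∀ i, M i i = 0) (hcard : 2 ≤ Fintype.card ι) :
    M.charpoly.coeff (Fintype.card ι - 2) =
      ∑ σ ∈ univ.filter (fun σ : Perm ι => #σ.support = 2),
        Perm.sign σ • ∏ l ∈ σ.support, -M (σ l) l := by
  rw [charpoly, det_apply, finsetSum_coeff, sum_filter]
  refine sum_congr rfl fun σ _ => ?_
  -- only the moved points contribute constants; each fixed point contributes a factor `X`
  have hprod : ∏ i, charmatrix M (σ i) i =
      X ^ (Fintype.card ι - #σ.support) * C (∏ l ∈ σ.support, -M (σ l) l) := by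
    rw [← prod_compl_mul_prod σ.support, map_prod, ← card_compl, ← prod_const]
    congr 1
    · refine prod_congr rfl fun i hi => ?_
      rw [Perm.notMem_support.mp (mem_compl.mp hi), charmatrix_apply_eq, hM, map_zero, sub_zero]
    · refine prod_congr rfl fun l hl => ?_
      rw [charmatrix_apply_ne _ _ _ (Perm.mem_support.mp hl), map_neg]
  have hsupp : #σ.support ≤ Fintype.card ι := card_le_univ _
  rw [hprod, coeff_smul, mul_comm, coeff_C_mul, coeff_X_pow]
  by_cases h2 : #σ.support = 2
  · rw [if_pos h2, if_pos (by omega), mul_one]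
  · rw [if_neg h2, if_neg (by omega), mul_zero, smul_zero]

lemma sign_swap_smul_prod_support {R ι : Type*} [CommRing R] [Fintype ι] [DecidableEq ι]
    (M : Matrix ι ι R) {a b : ι} (hab : a ≠ b) :
    Perm.sign (Equiv.swap a b) • ∏ l ∈ (Equiv.swap a b).support, -M (Equiv.swap a b l) l =
      -(M a b * M b a) := by
  rw [Perm.support_swap hab, Perm.sign_swap hab, prod_insert (by simp [hab]), prod_singleton,
    swap_apply_left, swap_apply_right, Units.neg_smul, one_smul]
  ring

lemma sign_swap_smul_prod_support_of_skew {R ι : Type*} [CommRing R] [Fintype ι]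
    [DecidableEq ι] {M : Matrix ι ι R} (hskew : ∀ i j, M j i = -M i j) {a b : ι} (hab : a ≠ b) :
    Perm.sign (Equiv.swap a b) • ∏ l ∈ (Equiv.swap a b).support, -M (Equiv.swap a b l) l =
      M a b ^ 2 := by
  rw [sign_swap_smul_prod_support M hab, hskew]
  ring

end Matrix

section Mutation

variable {n : ℕ} (B : Matrix (Fin n) (Fin n) ℤ)

lemma mutate_apply_of_or {k i j : Fin n} (h : i = k ∨ j = k) : mutate B k i j = -B i j :=
  if_pos h

lemma mutate_apply_of_ne {k i j : Fin n} (hi : i ≠ k) (hj : j ≠ k) :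
    mutate B k i j = B i j + (B i k).sign * max (B i k * B k j) 0 :=
  if_neg (by tauto)

variable {B}

lemma mutate_skew (hskew : ∀ i j, B j i = -B i j) (k i j : Fin n) :
    mutate B k j i = -mutate B k i j := by
  by_cases h : i = k ∨ j = k
  · rw [mutate_apply_of_or B h, mutate_apply_of_or B h.symm, hskew]
  · push Not at h
    rw [mutate_apply_of_ne B h.2 h.1, mutate_apply_of_ne B h.1 h.2, hskew i j, hskew i k,
      hskew k j, Int.sign_neg, neg_mul_neg, mul_comm (B k j), Int.sign_mul_max_mul_comm]
    ring

lemma mutate_eq_diagonal_mul_mul_diagonal (hskew : ∀ i j, B j i = -B i j) {k : Fin n}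
    (hk : (∀ i, 0 ≤ B i k) ∨ ∀ i, B i k ≤ 0) :
    mutate B k = Matrix.diagonal (fun i => if i = k then -1 else 1) * B *
      Matrix.diagonal (fun i => if i = k then -1 else 1) := by
  ext i j
  rw [Matrix.mul_diagonal, Matrix.diagonal_mul]
  by_cases h : i = k ∨ j = k
  · rw [mutate_apply_of_or B h]
    by_cases hij : i = j
    · subst hij
      simp [diag_eq_zero_of_skew hskew]
    · rcases h with rfl | rfl <;> simp [hij, Ne.symm hij]
  · push Not at h
    -- at a sink or a source, `b_ik` and `b_kj = -b_jk` never have the same strict sign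
    have hprod : B i k * B k j ≤ 0 := by
      rw [hskew j k]
      rcases hk with hk | hk <;> nlinarith [hk i, hk j]
    simp [mutate_apply_of_ne B h.1 h.2, h.1, h.2, max_eq_right hprod]

theorem charpoly_mutate_of_sink_or_source (hskew : ∀ i j, B j i = -B i j) {k : Fin n}
    (hk : (∀ i, 0 ≤ B i k) ∨ ∀ i, B i k ≤ 0) :
    (mutate B k).charpoly = B.charpoly := by
  set D : Matrix (Fin n) (Fin n) ℤ := Matrix.diagonal fun i => if i = k then -1 else 1
  have hDD : D * D = 1 := by
    rw [Matrix.diagonal_mul_diagonal, ← Matrix.diagonal_one]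
    congr 1
    ext i
    split_ifs <;> rfl
  rw [mutate_eq_diagonal_mul_mul_diagonal hskew hk, Matrix.mul_assoc, Matrix.charpoly_mul_comm,
    Matrix.mul_assoc, hDD, Matrix.mul_one]

variable (hskew : ∀ i j, B j i = -B i j)
  (hno3cycle : ¬ ∃ i j l : Fin n, 0 < B i j ∧ 0 < B j l ∧ 0 < B l i)
include hskew hno3cycle

lemma mul_mutation_correction_nonneg (k a b : Fin n) :
    0 ≤ B a b * ((B a k).sign * max (B a k * B k b) 0) := by
  rcases le_or_gt (B a k * B k b) 0 with hp | hp
  · simp [max_eq_right hp]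
  rw [max_eq_left hp.le]
  rcases pos_and_pos_or_neg_and_neg_of_mul_pos hp with ⟨hak, hkb⟩ | ⟨hak, hkb⟩
  · -- `a → k → b`, so `b → a` would close a 3-cycle
    have hab : 0 ≤ B a b := by
      by_contra! hab
      exact hno3cycle ⟨a, k, b, hak, hkb, by rw [hskew a b]; omega⟩
    rw [Int.sign_eq_one_of_pos hak]
    positivity
  · -- `b → k → a`, so `a → b` would close a 3-cycle
    have hab : B a b ≤ 0 := by
      by_contra! hab
      exact hno3cycle ⟨a, b, k, hab, by rw [hskew k b]; omega, by rw [hskew a k]; omega⟩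
    rw [Int.sign_eq_neg_one_of_neg hak]
    nlinarith

lemma sq_le_sq_mutate_apply (k a b : Fin n) : B a b ^ 2 ≤ mutate B k a b ^ 2 := by
  by_cases h : a = k ∨ b = k
  · rw [mutate_apply_of_or B h, neg_sq]
  · push Not at h
    rw [mutate_apply_of_ne B h.1 h.2]
    nlinarith [mul_mutation_correction_nonneg hskew hno3cycle k a b]

lemma sq_lt_sq_mutate_apply {k i j : Fin n} (hi : 0 < B i k) (hj : B j k < 0) :
    B i j ^ 2 < mutate B k i j ^ 2 := by
  have hkk := diag_eq_zero_of_skew hskew k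
  have hkj : 0 < B k j := by rw [hskew j k]; omega
  rw [mutate_apply_of_ne B (by rintro rfl; omega) (by rintro rfl; omega),
    Int.sign_eq_one_of_pos hi, one_mul, max_eq_left (by positivity)]
  have := mul_mutation_correction_nonneg hskew hno3cycle k i j
  rw [Int.sign_eq_one_of_pos hi, one_mul, max_eq_left (by positivity)] at this
  nlinarith [mul_pos hi hkj]

theorem charpoly_mutate_ne {k i j : Fin n} (hi : 0 < B i k) (hj : B j k < 0) :
    (mutate B k).charpoly ≠ B.charpoly := by
  have hij : i ≠ j := by rintro rfl; omega
  have hn : 2 ≤ Fintype.card (Fin n) := Fintype.one_lt_card_iff.mpr ⟨i, j, hij⟩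
  have hskew' := mutate_skew hskew k
  intro h
  have hcoeff := congrArg (coeff · (Fintype.card (Fin n) - 2)) h
  rw [Matrix.charpoly_coeff_card_sub_two _ (diag_eq_zero_of_skew hskew') hn,
    Matrix.charpoly_coeff_card_sub_two _ (diag_eq_zero_of_skew hskew) hn] at hcoeff
  refine hcoeff.not_gt (sum_lt_sum (fun σ hσ => ?_) ⟨swap i j, ?_, ?_⟩)
  · obtain ⟨a, b, hab, rfl⟩ := Perm.card_support_eq_two.mp (mem_filter.mp hσ).2
    rw [Matrix.sign_swap_smul_prod_support_of_skew hskew hab,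
      Matrix.sign_swap_smul_prod_support_of_skew hskew' hab]
    exact sq_le_sq_mutate_apply hskew hno3cycle k a b
  · simpa using Perm.card_support_swap hij
  · rw [Matrix.sign_swap_smul_prod_support_of_skew hskew hij,
      Matrix.sign_swap_smul_prod_support_of_skew hskew' hij]
    exact sq_lt_sq_mutate_apply hskew hno3cycle hi hj

end Mutation

theorem stmt15 {n : ℕ} (B : Matrix (Fin n) (Fin n) ℤ)
    (hskew : ∀ i j, B j i = -B i j)
    (hno3cycle : ¬ ∃ i j l : Fin n, 0 < B i j ∧ 0 < B j l ∧ 0 < B l i)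
    (k : Fin n) :
    Matrix.charpoly (mutate B k) = Matrix.charpoly B ↔
      ((∀ i, 0 ≤ B i k) ∨ (∀ i, B i k ≤ 0)) := by
  refine ⟨fun h => ?_, charpoly_mutate_of_sink_or_source hskew⟩
  by_contra! hk
  obtain ⟨⟨j, hj⟩, ⟨i, hi⟩⟩ := hk
  exact charpoly_mutate_ne hskew hno3cycle hi hj h
end

section
/- Let B = (b_{ij}) be an n×n integer skew-symmetric matrix with all entries in {−1, 0, 1}, n ≥ 4, and assume the underlying graph of B contains no 4-cycles, i.e., there are no four distinct indices i, j, k, l with b_{ij}, b_{jk}, b_{kl}, b_{li} all nonzero. Then the sum, over all 4-element subsets S ⊆ {1,…,n}, of the determinant of the principal submatrix of B indexed by S, equals the number of unordered pairs {{i,j},{k,l}} of edges of the underlying graph with {i,j} ∩ {k,l} = ∅ (pairs of disadjacent arrows of Q(B)). -/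
/-!
A `4 × 4` skew-symmetric matrix has determinant the square of its Pfaffian
`b₀₁ b₂₃ - b₀₂ b₁₃ + b₀₃ b₁₂`, a signed sum over the three perfect matchings of the four indices.
Any two distinct perfect matchings together form a `4`-cycle, so without `4`-cycles at most one
term is nonzero and the principal minor on `S` equals the number of perfect matchings of `S` by
edges of the graph. Summing over `S` counts every pair of disjoint edges exactly once, at the
union `S` of the two edges.
-/

open Finset Matrix

namespace Matrix

variable {ι R : Type*}

theorem det_fin_four_of_alternating [CommRing R] (A : Matrix (Fin 4) (Fin 4) R)
    (hskew : ∀ i j, A j i = -A i j) (hdiag : ∀ i, A i i = 0) :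
    A.det = (A 0 1 * A 2 3 - A 0 2 * A 1 3 + A 0 3 * A 1 2) ^ 2 := by
  have hA : A = of ![![0, A 0 1, A 0 2, A 0 3], ![-A 0 1, 0, A 1 2, A 1 3],
      ![-A 0 2, -A 1 2, 0, A 2 3], ![-A 0 3, -A 1 3, -A 2 3, 0]] := by
    ext i j
    fin_cases i <;> fin_cases j <;> simp [hdiag, ← hskew]
  rw [hA]
  simp [det_succ_row_zero, Fin.sum_univ_succ, Fin.succAbove]
  ring

def HasNoFourCycle [Zero R] (B : Matrix ι ι R) : Prop :=
  ¬ ∃ i j k l : ι,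
      i ≠ j ∧ i ≠ k ∧ i ≠ l ∧ j ≠ k ∧ j ≠ l ∧ k ≠ l ∧
      B i j ≠ 0 ∧ B j k ≠ 0 ∧ B k l ≠ 0 ∧ B l i ≠ 0

theorem HasNoFourCycle.mul_mul_eq_zero [MulZeroClass R] [NoZeroDivisors R]
    {B : Matrix ι ι R} (hB : B.HasNoFourCycle) {i j k l : ι} (hij : i ≠ j) (hik : i ≠ k)
    (hil : i ≠ l) (hjk : j ≠ k) (hjl : j ≠ l) (hkl : k ≠ l) :
    B i j * B k l * (B j k * B l i) = 0 := by
  by_contra h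
  simp only [mul_ne_zero_iff] at h
  exact hB ⟨i, j, k, l, hij, hik, hil, hjk, hjl, hkl, h.1.1, h.2.1, h.1.2, h.2.2⟩

theorem HasNoFourCycle.det_submatrix_fin_four [CommRing R] [NoZeroDivisors R]
    {B : Matrix ι ι R} (hB : B.HasNoFourCycle) (hskew : ∀ i j, B j i = -B i j)
    (hdiag : ∀ i, B i i = 0) {v : Fin 4 → ι} (hv : Function.Injective v) :
    (B.submatrix v v).det = (B (v 0) (v 1) * B (v 2) (v 3)) ^ 2 +
      (B (v 0) (v 2) * B (v 1) (v 3)) ^ 2 + (B (v 0) (v 3) * B (v 1) (v 2)) ^ 2 := by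
  have hne : ∀ i j : Fin 4, i ≠ j → v i ≠ v j := fun i j h => hv.ne h
  have h0132 := hB.mul_mul_eq_zero (hne 0 1 (by decide)) (hne 0 3 (by decide))
    (hne 0 2 (by decide)) (hne 1 3 (by decide)) (hne 1 2 (by decide)) (hne 3 2 (by decide))
  have h0123 := hB.mul_mul_eq_zero (hne 0 1 (by decide)) (hne 0 2 (by decide))
    (hne 0 3 (by decide)) (hne 1 2 (by decide)) (hne 1 3 (by decide)) (hne 2 3 (by decide))
  have h0213 := hB.mul_mul_eq_zero (hne 0 2 (by decide)) (hne 0 1 (by decide))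
    (hne 0 3 (by decide)) (hne 2 1 (by decide)) (hne 2 3 (by decide)) (hne 1 3 (by decide))
  rw [hskew (v 2) (v 3), hskew (v 0) (v 2)] at h0132
  rw [hskew (v 0) (v 3)] at h0123
  rw [hskew (v 1) (v 2), hskew (v 0) (v 3)] at h0213
  rw [det_fin_four_of_alternating (B.submatrix v v) (fun i j => hskew _ _) (fun i => hdiag _)]
  simp only [submatrix_apply]
  linear_combination (-2) * h0132 - 2 * h0123 - 2 * h0213

variable [LinearOrder ι]

theorem det_submatrix_subtype_eq_det_submatrix_orderEmbOfFin [CommRing R] (A : Matrix ι ι R)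
    (S : Finset ι) {k : ℕ} (h : #S = k) :
    (A.submatrix (fun i : S => (i : ι)) (fun j : S => (j : ι))).det =
      (A.submatrix (S.orderEmbOfFin h) (S.orderEmbOfFin h)).det := by
  rw [← det_submatrix_equiv_self (S.orderIsoOfFin h).toEquiv]
  rfl

def disjointEdgePairs [Fintype ι] [Zero R] [DecidableEq R] (B : Matrix ι ι R) :
    Finset ((ι × ι) × (ι × ι)) :=
  univ.filter fun q =>
    q.1.1 < q.1.2 ∧ q.2.1 < q.2.2 ∧ q.1.1 < q.2.1 ∧
    B q.1.1 q.1.2 ≠ 0 ∧ B q.2.1 q.2.2 ≠ 0 ∧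
    q.1.1 ≠ q.2.1 ∧ q.1.1 ≠ q.2.2 ∧ q.1.2 ≠ q.2.1 ∧ q.1.2 ≠ q.2.2

end Matrix

section Pairings

variable {ι : Type*} [LinearOrder ι]

def pairings (v : Fin 4 → ι) : Finset ((ι × ι) × (ι × ι)) :=
  {((v 0, v 1), (v 2, v 3)), ((v 0, v 2), (v 1, v 3)), ((v 0, v 3), (v 1, v 2))}

theorem sum_pairings {M : Type*} [AddCommMonoid M] {v : Fin 4 → ι} (hv : Function.Injective v)
    (f : (ι × ι) × (ι × ι) → M) :
    ∑ q ∈ pairings v, f q =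
      f ((v 0, v 1), (v 2, v 3)) + f ((v 0, v 2), (v 1, v 3)) + f ((v 0, v 3), (v 1, v 2)) := by
  rw [pairings, sum_insert (by simp [hv.eq_iff]), sum_insert (by simp [hv.eq_iff]), sum_singleton,
    add_assoc]

theorem mem_pairings_of_mem_range {v : Fin 4 → ι} (hv : StrictMono v) {a b c d : ι}
    (hab : a < b) (hcd : c < d) (hac : a < c) (hbc : b ≠ c) (hbd : b ≠ d)
    (ha : a ∈ Set.range v) (hb : b ∈ Set.range v) (hc : c ∈ Set.range v)
    (hd : d ∈ Set.range v) :
    ((a, b), (c, d)) ∈ pairings v := by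
  obtain ⟨i, rfl⟩ := ha
  obtain ⟨j, rfl⟩ := hb
  obtain ⟨k, rfl⟩ := hc
  obtain ⟨l, rfl⟩ := hd
  rw [hv.lt_iff_lt] at hab hcd hac
  rw [hv.injective.ne_iff] at hbc hbd
  simp only [pairings, mem_insert, mem_singleton, Prod.mk.injEq, hv.injective.eq_iff]
  omega

variable {R : Type*} [Fintype ι] [Zero R] [DecidableEq R]

theorem insert_mem_powersetCard_of_mem_disjointEdgePairs {B : Matrix ι ι R}
    {q : (ι × ι) × (ι × ι)} (hq : q ∈ B.disjointEdgePairs) :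
    {q.1.1, q.1.2, q.2.1, q.2.2} ∈ (univ : Finset ι).powersetCard 4 := by
  obtain ⟨-, hab, hcd, hac, -, -, -, -, hbc, hbd⟩ := mem_filter.mp hq
  exact mem_powersetCard.mpr ⟨subset_univ _, card_eq_four.mpr
    ⟨_, _, _, _, hab.ne, hac.ne, (hac.trans hcd).ne, hbc, hbd, hcd.ne, rfl⟩⟩

theorem filter_disjointEdgePairs_eq_filter_pairings (B : Matrix ι ι R) {v : Fin 4 → ι}
    (hv : StrictMono v) {S : Finset ι} (hS : Set.range v = S) :
    B.disjointEdgePairs.filter (fun q => {q.1.1, q.1.2, q.2.1, q.2.2} = S) =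
      (pairings v).filter (fun q => B q.1.1 q.1.2 ≠ 0 ∧ B q.2.1 q.2.2 ≠ 0) := by
  ext ⟨⟨a, b⟩, c, d⟩
  simp only [disjointEdgePairs, mem_filter, mem_univ, true_and]
  constructor
  · rintro ⟨⟨hab, hcd, hac, hB₁, hB₂, -, -, hbc, hbd⟩, habcd⟩
    have hmem : ∀ x ∈ ({a, b, c, d} : Finset ι), x ∈ Set.range v := fun x hx => by
      rwa [hS, mem_coe, ← habcd]
    exact ⟨mem_pairings_of_mem_range hv hab hcd hac hbc hbd (hmem a (by simp))
      (hmem b (by simp)) (hmem c (by simp)) (hmem d (by simp)), hB₁, hB₂⟩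
  · rintro ⟨hq, hB₁, hB₂⟩
    simp only [pairings, mem_insert, mem_singleton, Prod.mk.injEq] at hq
    rw [← coe_inj, ← hS]
    rcases hq with ⟨⟨rfl, rfl⟩, rfl, rfl⟩ | ⟨⟨rfl, rfl⟩, rfl, rfl⟩ | ⟨⟨rfl, rfl⟩, rfl, rfl⟩ <;>
      refine ⟨by simp [hv.lt_iff_lt, hv.injective.eq_iff, hB₁, hB₂], ?_⟩ <;>
      ext x <;> simp [Fin.exists_fin_succ, eq_comm] <;> tauto

end Pairings

theorem Int.sq_mul_eq_ite {x y : ℤ} (hx : x = -1 ∨ x = 0 ∨ x = 1) (hy : y = -1 ∨ y = 0 ∨ y = 1) :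
    (x * y) ^ 2 = if x ≠ 0 ∧ y ≠ 0 then 1 else 0 := by
  rcases hx with rfl | rfl | rfl <;> rcases hy with rfl | rfl | rfl <;> norm_num

theorem stmt16_general {n : ℕ} (B : Matrix (Fin n) (Fin n) ℤ)
    (hskew : ∀ i j, B j i = -B i j)
    (hval : ∀ i j, B i j = -1 ∨ B i j = 0 ∨ B i j = 1)
    (hno4cycle : ¬ ∃ i j k l : Fin n,
      i ≠ j ∧ i ≠ k ∧ i ≠ l ∧ j ≠ k ∧ j ≠ l ∧ k ≠ l ∧
      B i j ≠ 0 ∧ B j k ≠ 0 ∧ B k l ≠ 0 ∧ B l i ≠ 0) :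
    (∑ S ∈ (Finset.univ : Finset (Fin n)).powersetCard 4,
        Matrix.det (B.submatrix (fun i : S => (i : Fin n)) (fun j : S => (j : Fin n)))) =
      ((Finset.univ.filter
        (fun q : (Fin n × Fin n) × (Fin n × Fin n) =>
          q.1.1 < q.1.2 ∧ q.2.1 < q.2.2 ∧ q.1.1 < q.2.1 ∧
          B q.1.1 q.1.2 ≠ 0 ∧ B q.2.1 q.2.2 ≠ 0 ∧
          q.1.1 ≠ q.2.1 ∧ q.1.1 ≠ q.2.2 ∧ q.1.2 ≠ q.2.1 ∧ q.1.2 ≠ q.2.2)).card : ℤ) := by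
  have hB : B.HasNoFourCycle := hno4cycle
  have hdiag : ∀ i, B i i = 0 := fun i => by linarith [hskew i i]
  change _ = (#B.disjointEdgePairs : ℤ)
  rw [card_eq_sum_card_fiberwise fun _ => insert_mem_powersetCard_of_mem_disjointEdgePairs]
  push_cast
  refine sum_congr rfl fun S hS => ?_
  have hS4 : #S = 4 := (mem_powersetCard.mp hS).2
  set v := S.orderEmbOfFin hS4
  rw [det_submatrix_subtype_eq_det_submatrix_orderEmbOfFin B S hS4,
    hB.det_submatrix_fin_four hskew hdiag v.injective,
    filter_disjointEdgePairs_eq_filter_pairings B v.strictMono (range_orderEmbOfFin S hS4),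
    card_filter, Nat.cast_sum, sum_pairings v.injective]
  simp only [Int.sq_mul_eq_ite (hval _ _) (hval _ _), Nat.cast_ite, Nat.cast_one, Nat.cast_zero]

theorem stmt16 {n : ℕ} (hn : 4 ≤ n) (B : Matrix (Fin n) (Fin n) ℤ)
    (hskew : ∀ i j, B j i = -B i j)
    (hval : ∀ i j, B i j = -1 ∨ B i j = 0 ∨ B i j = 1)
    (hno4cycle : ¬ ∃ i j k l : Fin n,
      i ≠ j ∧ i ≠ k ∧ i ≠ l ∧ j ≠ k ∧ j ≠ l ∧ k ≠ l ∧
      B i j ≠ 0 ∧ B j k ≠ 0 ∧ B k l ≠ 0 ∧ B l i ≠ 0) :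
    (∑ S ∈ (Finset.univ : Finset (Fin n)).powersetCard 4,
        Matrix.det (B.submatrix (fun i : S => (i : Fin n)) (fun j : S => (j : Fin n)))) =
      ((Finset.univ.filter
        (fun q : (Fin n × Fin n) × (Fin n × Fin n) =>
          q.1.1 < q.1.2 ∧ q.2.1 < q.2.2 ∧ q.1.1 < q.2.1 ∧
          B q.1.1 q.1.2 ≠ 0 ∧ B q.2.1 q.2.2 ≠ 0 ∧
          q.1.1 ≠ q.2.1 ∧ q.1.1 ≠ q.2.2 ∧ q.1.2 ≠ q.2.1 ∧ q.1.2 ≠ q.2.2)).card : ℤ) :=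
  stmt16_general B hskew hval hno4cycle
end
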